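/- arXiv:1405.7942 — 16 statements merged into one kernel-verified Lean document; each statement's English description precedes it below -/
import Mathlib

section
/- If f satisfies the Drygas inequality, then for all x ∈ G, 2f(x) + f(x) + f(-x) = f(2x), i.e., 3f(x) + f(-x) = f(2x). -/
theorem stmt1 {G E : Type*} [AddCommGroup G] [NormedAddCommGroup E]
    [InnerProductSpace ℝ E] (f : G → E)
    (h : ∀ x y : G, ‖2 • f x + f y + f (-y) - f (x - y)‖ ≤ ‖f (x + y)‖) :
    ∀ x : G, (3 : ℝ) • f x + f (-x) = f (2 • x) := by
  have h0 : f 0 = 0 := by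
    have := h 0 0
    simp only [neg_zero, sub_zero, add_zero, two_smul] at this
    have h3 : ‖(3 : ℝ) • f 0‖ ≤ ‖f 0‖ := by
      convert this using 2
      module
    rw [norm_smul] at h3
    simp only [Real.norm_ofNat] at h3
    have : ‖f 0‖ ≤ 0 := by linarith
    simpa using norm_le_zero_iff.mp this
  intro x
  have := h x (-x)
  rw [neg_neg, sub_neg_eq_add, add_neg_cancel, h0, norm_zero] at this
  have hz : 2 • f x + f (-x) + f x - f (x + x) = 0 :=
    norm_le_zero_iff.mp this
  have he : f (x + x) = 2 • f x + f (-x) + f x := (sub_eq_zero.mp hz).symm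
  rw [two_smul, he]
  module
end

section
/- If f satisfies the Drygas inequality, then the even part fᵉ(x) = (f(x)+f(-x))/2 satisfies fᵉ(2x) = 4fᵉ(x) for all x ∈ G. -/
theorem stmt2 {G E : Type*} [AddCommGroup G] [NormedAddCommGroup E]
    [InnerProductSpace ℝ E] (f : G → E)
    (h : ∀ x y : G, ‖2 • f x + f y + f (-y) - f (x - y)‖ ≤ ‖f (x + y)‖)
    (fe : G → E) (hfe : ∀ x, fe x = (2 : ℝ)⁻¹ • (f x + f (-x))) :
    ∀ x : G, fe (2 • x) = (4 : ℝ) • fe x := by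
  have h0 : f 0 = 0 := by
    have := h 0 0
    simp only [neg_zero, sub_zero, add_zero, two_smul] at this
    have heq : f 0 + f 0 + f 0 + f 0 - f 0 = (3 : ℝ) • f 0 := by module
    rw [heq, norm_smul] at this
    simp only [Real.norm_ofNat] at this
    have : ‖f 0‖ = 0 := by linarith [norm_nonneg (f 0)]
    simpa using this
  have key : ∀ x : G, f (x + x) = f x + f x + f x + f (-x) := by
    intro x
    have := h x (-x)
    rw [neg_neg, sub_neg_eq_add, add_neg_cancel, h0, norm_zero, two_smul] at this
    have hz : f x + f x + f (-x) + f x - f (x + x) = 0 := by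
      have := norm_le_zero_iff.mp this
      linear_combination (norm := abel_nf) this
    have : f (x + x) = f x + f x + f (-x) + f x := by
      linear_combination (norm := abel_nf) -hz
    rw [this]; abel
  intro x
  rw [hfe, hfe, two_smul, key x]
  have : -(x + x) = (-x) + (-x) := by abel
  rw [this, key (-x), neg_neg]
  module
end

section
/- If f satisfies the Drygas inequality, then the odd part fᵒ(x) = (f(x)-f(-x))/2 satisfies fᵒ(2x) = 2fᵒ(x) for all x ∈ G. -/
theorem stmt3 {G E : Type*} [AddCommGroup G] [NormedAddCommGroup E]
    [InnerProductSpace ℝ E] (f : G → E)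
    (h : ∀ x y : G, ‖2 • f x + f y + f (-y) - f (x - y)‖ ≤ ‖f (x + y)‖)
    (fo : G → E) (hfo : ∀ x, fo x = (2 : ℝ)⁻¹ • (f x - f (-x))) :
    ∀ x : G, fo (2 • x) = (2 : ℝ) • fo x := by
  have h0 : f 0 = 0 := by
    have h1 := h 0 0
    simp only [neg_zero, sub_zero, add_zero, two_smul] at h1
    have e : f 0 + f 0 + f 0 + f 0 - f 0 = (3 : ℝ) • f 0 := by module
    rw [e, norm_smul] at h1
    simp at h1
    have := norm_nonneg (f 0)
    have : ‖f 0‖ = 0 := by nlinarith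
    simpa using this
  have key : ∀ x : G, f (x + x) = 2 • f x + f (-x) + f x := by
    intro x
    have h1 := h x (-x)
    simp only [neg_neg, sub_neg_eq_add, add_neg_cancel, h0, norm_zero] at h1
    have h2 : ‖2 • f x + f (-x) + f x - f (x + x)‖ = 0 :=
      le_antisymm h1 (norm_nonneg _)
    have h3 := norm_eq_zero.mp h2
    have h4 := sub_eq_zero.mp h3
    exact h4.symm
  intro x
  have k1 := key x
  have k2 := key (-x)
  rw [neg_neg] at k2
  have e2 : (2 : ℕ) • x = x + x := two_smul ℕ x
  have e3 : -(x + x) = -x + -x := by abel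
  rw [hfo, hfo, e2, e3, k1, k2, two_smul, two_smul]
  module
end

section
/- If f satisfies the Drygas inequality, then for every n ∈ ℕ and x ∈ G, fᵉ(x) = 4⁻ⁿ fᵉ(2ⁿx) and fᵒ(x) = 2⁻ⁿ fᵒ(2ⁿx). -/
theorem stmt4 {G E : Type*} [AddCommGroup G] [NormedAddCommGroup E]
    [InnerProductSpace ℝ E] (f : G → E)
    (h : ∀ x y : G, ‖2 • f x + f y + f (-y) - f (x - y)‖ ≤ ‖f (x + y)‖)
    (fe fo : G → E) (hfe : ∀ x, fe x = (2 : ℝ)⁻¹ • (f x + f (-x)))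
    (hfo : ∀ x, fo x = (2 : ℝ)⁻¹ • (f x - f (-x))) :
    ∀ (n : ℕ) (x : G), fe x = ((4 : ℝ)⁻¹) ^ n • fe ((2 ^ n : ℕ) • x) ∧
      fo x = ((2 : ℝ)⁻¹) ^ n • fo ((2 ^ n : ℕ) • x) := by
  have h0 : f 0 = 0 := by
    have h00 := h 0 0
    simp only [neg_zero, sub_zero, add_zero, zero_add, zero_sub] at h00
    have e3 : (2 : ℕ) • f 0 + f 0 + f 0 - f 0 = (3 : ℝ) • f 0 := by
      rw [two_nsmul]; module
    rw [e3, norm_smul] at h00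
    have : ‖f 0‖ = 0 := by
      simp only [Real.norm_ofNat] at h00; nlinarith [norm_nonneg (f 0)]
    simpa using this
  have hd : ∀ x : G, f (x + x) = (3 : ℝ) • f x + f (-x) := by
    intro x
    have hx := h x (-x)
    rw [add_neg_cancel, h0, norm_zero] at hx
    have hx0 : 2 • f x + f (-x) + f (- -x) - f (x - -x) = 0 :=
      norm_le_zero_iff.mp hx
    have hthis : f (x - -x) = 2 • f x + f (-x) + f (- -x) := by
      rw [eq_comm, ← sub_eq_zero]; exact hx0
    rw [neg_neg, sub_neg_eq_add] at hthis
    rw [hthis, two_nsmul]; module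
  have hstep : ∀ x : G,
      fe (x + x) = (4 : ℝ) • fe x ∧ fo (x + x) = (2 : ℝ) • fo x := by
    intro x
    have hneg : -(x + x) = -x + -x := by abel
    constructor
    · rw [hfe, hfe, hneg, hd, hd, neg_neg]; module
    · rw [hfo, hfo, hneg, hd, hd, neg_neg]; module
  intro n
  induction n with
  | zero => intro x; simp
  | succ n ih =>
    intro x
    obtain ⟨he, ho⟩ := ih x
    have hx2 : (2 ^ (n + 1) : ℕ) • x = (2 ^ n : ℕ) • x + (2 ^ n : ℕ) • x := by
      rw [pow_succ, mul_comm, mul_smul, two_nsmul]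
    obtain ⟨he2, ho2⟩ := hstep ((2 ^ n : ℕ) • x)
    constructor
    · rw [hx2, he2, he, smul_smul, pow_succ]
      congr 1; ring
    · rw [hx2, ho2, ho, smul_smul, pow_succ]
      congr 1; ring
end

section
/- If f satisfies the Drygas inequality, then ‖4fᵉ(x)+4fᵉ(y)-2fᵉ(x-y)‖ ≤ ‖f(x+y)‖ + ‖f(-x-y)‖ for all x, y ∈ G. -/
theorem stmt5 {G E : Type*} [AddCommGroup G] [NormedAddCommGroup E]
    [InnerProductSpace ℝ E] (f : G → E)
    (h : ∀ x y : G, ‖2 • f x + f y + f (-y) - f (x - y)‖ ≤ ‖f (x + y)‖)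
    (fe : G → E) (hfe : ∀ x, fe x = (2 : ℝ)⁻¹ • (f x + f (-x))) :
    ∀ x y : G, ‖(4 : ℝ) • fe x + (4 : ℝ) • fe y - (2 : ℝ) • fe (x - y)‖ ≤
      ‖f (x + y)‖ + ‖f (-x - y)‖ := by
  intro x y
  have h1 := h x y
  have h2 := h (-x) (-y)
  simp only [neg_neg] at h2
  have key : (4:ℝ) • fe x + (4:ℝ) • fe y - (2:ℝ) • fe (x-y)
      = (2 • f x + f y + f (-y) - f (x - y)) + (2 • f (-x) + f (-y) + f y - f (-x - -y)) := by
    simp only [hfe]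
    have e1 : -x - -y = -(x - y) := by abel
    rw [e1]
    simp only [two_smul]
    module
  rw [key]
  have e2 : -x + -y = -x - y := by abel
  rw [e2] at h2
  exact (norm_add_le _ _).trans (add_le_add h1 h2)
end

section
/- If f satisfies the Drygas inequality, then its even part fᵉ satisfies the quadratic inequality ‖2fᵉ(x)+2fᵉ(y)-fᵉ(x-y)‖ ≤ ‖fᵉ(x+y)‖ for all x, y ∈ G. -/
open scoped RealInnerProductSpace

theorem stmt6 {G E : Type*} [AddCommGroup G] [NormedAddCommGroup E]
    [InnerProductSpace ℝ E] (f : G → E)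
    (h : ∀ x y : G, ‖2 • f x + f y + f (-y) - f (x - y)‖ ≤ ‖f (x + y)‖)
    (fe : G → E) (hfe : ∀ x, fe x = (2 : ℝ)⁻¹ • (f x + f (-x))) :
    ∀ x y : G, ‖2 • fe x + 2 • fe y - fe (x - y)‖ ≤ ‖fe (x + y)‖ := by
  -- odd part
  obtain ⟨d, hdd⟩ : ∃ d : G → E, ∀ z, d z = (2:ℝ)⁻¹ • (f z - f (-z)) :=
    ⟨_, fun _ => rfl⟩
  -- f 0 = 0
  have hf0 : f 0 = 0 := by
    have h00 := h 0 0
    have e1 : 2 • f 0 + f 0 + f (-0) - f (0 - 0) = (3:ℝ) • f 0 := by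
      rw [neg_zero, sub_self, two_smul]; module
    rw [e1, zero_add, norm_smul] at h00
    simp only [Real.norm_ofNat] at h00
    have := norm_nonneg (f 0)
    have : ‖f 0‖ ≤ 0 := by linarith
    exact norm_le_zero_iff.mp this
  -- doubling formula
  have hdbl : ∀ x : G, f (x + x) = (3:ℝ) • f x + f (-x) := by
    intro x
    have hx := h x (-x)
    rw [neg_neg, sub_neg_eq_add, add_neg_cancel, hf0, norm_zero] at hx
    have h2 : 2 • f x + f (-x) + f x - f (x + x) = 0 := norm_le_zero_iff.mp hx
    have h3 : 2 • f x + f (-x) + f x = f (x + x) := by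
      rwa [sub_eq_zero] at h2
    rw [← h3, two_smul]; module
  -- basic identities for even/odd parts
  have hfeneg : ∀ z : G, fe (-z) = fe z := by
    intro z; rw [hfe, hfe, neg_neg, add_comm]
  have hdneg : ∀ z : G, d (-z) = -d z := by
    intro z; rw [hdd, hdd, neg_neg]; module
  have hsplit : ∀ z : G, f z = fe z + d z := by
    intro z; rw [hfe, hdd]; module
  have hsplitneg : ∀ z : G, f (-z) = fe z - d z := by
    intro z; rw [hfe, hdd]; module
  have hfe2 : ∀ z : G, fe (z + z) = (4:ℝ) • fe z := by
    intro z
    rw [hfe, hfe, show -(z+z) = (-z) + (-z) from by abel, hdbl z, hdbl (-z),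
      neg_neg]
    module
  -- squaring helper
  have hsq : ∀ u v : E, ‖u‖ ≤ ‖v‖ → ‖u‖^2 ≤ ‖v‖^2 := by
    intro u v huv
    have := norm_nonneg u
    nlinarith
  -- two-sided lemma
  have lemA : ∀ u a b : E, ‖u - b‖ ≤ ‖a‖ → ‖u - a‖ ≤ ‖b‖ → ‖u‖ ≤ ‖a + b‖ := by
    intro u a b h1 h2
    have s1 := hsq _ _ h1
    have s2 := hsq _ _ h2
    have e1 := norm_sub_sq_real u b
    have e2 := norm_sub_sq_real u a
    have key : ‖u‖^2 ≤ ⟪u, a⟫ + ⟪u, b⟫ := by linarith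
    have cs := real_inner_le_norm u (a + b)
    rw [inner_add_right] at cs
    have hn := norm_nonneg u
    have hm := norm_nonneg (a + b)
    nlinarith
  -- the K and B functions
  obtain ⟨B, hB⟩ : ∃ B : G → G → E, ∀ x y, B x y = (2:ℝ) • fe x + (2:ℝ) • fe y :=
    ⟨_, fun _ _ => rfl⟩
  obtain ⟨K, hK⟩ : ∃ K : G → G → E, ∀ x y, K x y = fe (x+y) + fe (x-y) - B x y :=
    ⟨_, fun _ _ => rfl⟩
  -- Lemma L : from h at (x+y, x-y) and (x+y, y-x)
  have lemL : ∀ x y : G,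
      ‖(fe (x+y) + fe (x-y)) + d (x+y)‖ ≤
      ‖((2:ℝ) • fe x + (2:ℝ) • fe y) + (d x + d y)‖ := by
    intro x y
    have h1 := h (x+y) (x-y)
    rw [show (x+y) - (x-y) = y + y from by abel,
        show (x+y) + (x-y) = x + x from by abel] at h1
    have h2 := h (x+y) (y-x)
    rw [show (x+y) - (y-x) = x + x from by abel,
        show (x+y) + (y-x) = y + y from by abel,
        show y - x = -(x-y) from by abel, neg_neg] at h2
    rw [show 2 • f (x+y) + f (-(x-y)) + f (x-y) =
        2 • f (x+y) + f (x-y) + f (-(x-y)) from by abel] at h2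
    have key := lemA _ _ _ h1 h2
    have n1 : 2 • f (x+y) + f (x-y) + f (-(x-y)) =
        (2:ℝ) • ((fe (x+y) + fe (x-y)) + d (x+y)) := by
      simp only [hfe, hdd, two_smul]; module
    have n2 : f (x+x) + f (y+y) =
        (2:ℝ) • (((2:ℝ) • fe x + (2:ℝ) • fe y) + (d x + d y)) := by
      rw [hdbl, hdbl]; simp only [hfe, hdd]; module
    rw [n1, n2, norm_smul, norm_smul] at key
    simp only [Real.norm_ofNat] at key
    linarith
  -- abstract quadruple lemma
  have lemQuad : ∀ D1 D2 D3 D4 p q W s e o : E,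
      ‖D1‖ ≤ ‖p‖ → ‖D3‖ ≤ ‖p‖ → ‖D2‖ ≤ ‖q‖ → ‖D4‖ ≤ ‖q‖ →
      p = e + o → q = e - o →
      D1 + D3 + (D2 + D4) = (4:ℝ) • W →
      D1 + D3 - (D2 + D4) = (4:ℝ) • s →
      ‖W‖^2 + ‖s‖^2 ≤ ‖e‖^2 + ‖o‖^2 := by
    intro D1 D2 D3 D4 p q W s e o h1 h3 h2 h4 idp idq idsum iddif
    have hU : ‖D1 + D3‖ ≤ ‖p‖ + ‖p‖ :=
      le_trans (norm_add_le _ _) (add_le_add h1 h3)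
    have hV : ‖D2 + D4‖ ≤ ‖q‖ + ‖q‖ :=
      le_trans (norm_add_le _ _) (add_le_add h2 h4)
    have e5a := norm_add_sq_real (D1 + D3) (D2 + D4)
    have e5b := norm_sub_sq_real (D1 + D3) (D2 + D4)
    have e5 : ‖D1 + D3 + (D2 + D4)‖^2 + ‖D1 + D3 - (D2 + D4)‖^2 =
        2*‖D1 + D3‖^2 + 2*‖D2 + D4‖^2 := by linarith
    rw [idsum, iddif] at e5
    have e6 : ‖(4:ℝ) • W‖^2 = 16 * ‖W‖^2 := by
      rw [norm_smul]; simp only [Real.norm_ofNat]; ring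
    have e6' : ‖(4:ℝ) • s‖^2 = 16 * ‖s‖^2 := by
      rw [norm_smul]; simp only [Real.norm_ofNat]; ring
    have e7a := norm_add_sq_real e o
    have e7b := norm_sub_sq_real e o
    have e7 : ‖p‖^2 + ‖q‖^2 = 2*‖e‖^2 + 2*‖o‖^2 := by
      rw [idp, idq]; linarith
    have e8 : ‖D1 + D3‖^2 ≤ (‖p‖ + ‖p‖)^2 :=
      pow_le_pow_left₀ (norm_nonneg _) hU 2
    have e9 : ‖D2 + D4‖^2 ≤ (‖q‖ + ‖q‖)^2 :=
      pow_le_pow_left₀ (norm_nonneg _) hV 2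
    have e8' : (‖p‖ + ‖p‖)^2 = 4 * ‖p‖^2 := by ring
    have e9' : (‖q‖ + ‖q‖)^2 = 4 * ‖q‖^2 := by ring
    linarith
  -- Lemma P'
  have lemP : ∀ x y : G,
      ‖fe (x+y) - K x y‖^2 + ‖d x + d y‖^2 ≤ ‖fe (x+y)‖^2 + ‖d (x+y)‖^2 := by
    intro x y
    have h1 := h x y
    have h3 := h y x
    rw [add_comm y x, show y - x = -(x - y) from by abel] at h3
    have h2 := h (-x) (-y)
    rw [neg_neg, show -x - -y = -(x - y) from by abel,
        show -x + -y = -(x+y) from by abel] at h2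
    have h4 := h (-y) (-x)
    rw [neg_neg, show -y - -x = x - y from by abel,
        show -y + -x = -(x+y) from by abel] at h4
    refine lemQuad _ _ _ _ _ _ _ _ _ _ h1 h3 h2 h4 (hsplit _) (hsplitneg _) ?_ ?_
    · rw [hK, hB]; simp only [hfe, hdd, two_smul]; module
    · simp only [hdd, two_smul]; module
  -- abstract pair lemma
  have lemPair : ∀ X o Y s : E, ‖X + o‖ ≤ ‖Y + s‖ → ‖X - o‖ ≤ ‖Y - s‖ →
      ‖X‖^2 + ‖o‖^2 ≤ ‖Y‖^2 + ‖s‖^2 := by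
    intro X o Y s h1 h2
    have s1 := hsq _ _ h1
    have s2 := hsq _ _ h2
    have e1 := norm_add_sq_real X o
    have e2 := norm_sub_sq_real X o
    have e3 := norm_add_sq_real Y s
    have e4 := norm_sub_sq_real Y s
    linarith
  -- Lemma C1
  have lemC1 : ∀ x y : G,
      ‖B x y + K x y‖^2 + ‖d (x+y)‖^2 ≤ ‖B x y‖^2 + ‖d x + d y‖^2 := by
    intro x y
    apply lemPair
    · have t := lemL x y
      have e1 : B x y + K x y + d (x+y) = (fe (x+y) + fe (x-y)) + d (x+y) := by
        rw [hK]; module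
      have e2 : B x y + (d x + d y) =
          ((2:ℝ) • fe x + (2:ℝ) • fe y) + (d x + d y) := by rw [hB]
      rw [e1, e2]; exact t
    · have t := lemL (-x) (-y)
      rw [show -x + -y = -(x+y) from by abel, show -x - -y = -(x-y) from by abel,
          hfeneg, hfeneg, hfeneg, hfeneg, hdneg, hdneg, hdneg] at t
      have e1 : B x y + K x y - d (x+y) = fe (x+y) + fe (x-y) + -d (x+y) := by
        rw [hK]; module
      have e2 : B x y - (d x + d y) =
          (2:ℝ) • fe x + (2:ℝ) • fe y + (-d x + -d y) := by rw [hB]; module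
      rw [e1, e2]; exact t
  -- S1
  have S1 : ∀ x y : G,
      ⟪K x y, K x y⟫ ≤ ⟪K x y, fe (x+y)⟫ - ⟪K x y, B x y⟫ := by
    intro x y
    have p1 := lemP x y
    have c1 := lemC1 x y
    have ea := norm_sub_sq_real (fe (x+y)) (K x y)
    have eb := norm_add_sq_real (B x y) (K x y)
    have ec : ⟪K x y, K x y⟫ = ‖K x y‖^2 := real_inner_self_eq_norm_sq _
    have ed := real_inner_comm (fe (x+y)) (K x y)
    have ee := real_inner_comm (B x y) (K x y)
    linarith
  -- S2
  have S2 : ∀ x y : G, ⟪K x y, K x y⟫ ≤ -⟪K x y, B x y⟫ := by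
    intro x y
    have a1 := S1 x y
    have hBneg : B x (-y) = B x y := by rw [hB, hB, hfeneg]
    have hKneg : K x (-y) = K x y := by
      rw [hK, hK, hBneg, sub_neg_eq_add, ← sub_eq_add_neg]
      module
    have a2 := S1 x (-y)
    rw [hKneg, hBneg, show x + -y = x - y from (sub_eq_add_neg x y).symm] at a2
    have ids : fe (x+y) + fe (x-y) = K x y + B x y := by rw [hK]; module
    have e3 : ⟪K x y, fe (x+y) + fe (x-y)⟫ = ⟪K x y, K x y + B x y⟫ := by
      rw [ids]
    rw [inner_add_right, inner_add_right] at e3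
    linarith
  -- K vanishes
  have K0 : ∀ x y : G, K x y = 0 := by
    intro x y
    have a1 := S2 x y
    have a2 := S2 (x+y) (x-y)
    have hKid : K (x+y) (x-y) = (-2:ℝ) • K x y := by
      rw [hK, hK, hB, hB, show (x+y) + (x-y) = x + x from by abel,
          show (x+y) - (x-y) = y + y from by abel, hfe2, hfe2]
      module
    have hBid : B (x+y) (x-y) = (2:ℝ) • K x y + (2:ℝ) • B x y := by
      rw [hB, hK, hB]; module
    rw [hKid, hBid] at a2
    simp only [real_inner_smul_left, real_inner_smul_right, inner_add_right] at a2
    have : ⟪K x y, K x y⟫ ≤ 0 := by linarith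
    exact real_inner_self_nonpos.mp this
  -- conclusion
  intro x y
  have hK0 := K0 x y
  rw [hK, hB] at hK0
  have h' : fe (x+y) + fe (x-y) = (2:ℝ) • fe x + (2:ℝ) • fe y :=
    sub_eq_zero.mp hK0
  have hgoal : 2 • fe x + 2 • fe y - fe (x - y) = fe (x+y) := by
    rw [two_smul, two_smul]
    have h2 : fe (x+y) = ((2:ℝ) • fe x + (2:ℝ) • fe y) - fe (x-y) :=
      eq_sub_iff_add_eq.mpr h'
    rw [h2]; module
  rw [hgoal]
end

section
/- If g : G → E is an even function satisfying ‖2g(x)+2g(y)-g(x-y)‖ ≤ ‖g(x+y)‖ for all x, y in an abelian group G, then g satisfies the quadratic functional equation g(x+y)+g(x-y) = 2g(x)+2g(y) for all x, y ∈ G. -/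
open RealInnerProductSpace

private lemma sumineq {E : Type*} [NormedAddCommGroup E] [InnerProductSpace ℝ E]
    (a b c : E) (h1 : ‖c - b‖ ≤ ‖a‖) (h2 : ‖c - a‖ ≤ ‖b‖) :
    ‖c‖ ^ 2 ≤ ⟪c, a + b⟫ := by
  have e1 : ‖c - b‖ ^ 2 ≤ ‖a‖ ^ 2 := pow_le_pow_left₀ (norm_nonneg _) h1 2
  have e2 : ‖c - a‖ ^ 2 ≤ ‖b‖ ^ 2 := pow_le_pow_left₀ (norm_nonneg _) h2 2
  rw [norm_sub_sq_real] at e1 e2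
  rw [inner_add_right]
  nlinarith

theorem stmt7 {G E : Type*} [AddCommGroup G] [NormedAddCommGroup E]
    [InnerProductSpace ℝ E] (g : G → E) (heven : ∀ x : G, g (-x) = g x)
    (h : ∀ x y : G, ‖2 • g x + 2 • g y - g (x - y)‖ ≤ ‖g (x + y)‖) :
    ∀ x y : G, g (x + y) + g (x - y) = 2 • g x + 2 • g y := by
  have g0 : g 0 = 0 := by
    have h00 := h 0 0
    rw [sub_zero, add_zero] at h00
    have h3 : 2 • g 0 + 2 • g 0 - g 0 = (3 : ℝ) • g 0 := by
      push_cast [← Nat.cast_smul_eq_nsmul ℝ]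
      module
    rw [h3, norm_smul] at h00
    simp at h00
    have := norm_nonneg (g 0)
    have hn : ‖g 0‖ = 0 := by nlinarith [h00]
    exact norm_eq_zero.mp hn
  have hdbl : ∀ x : G, g (x + x) = 4 • g x := by
    intro x
    have hx := h x (-x)
    rw [heven, sub_neg_eq_add, add_neg_cancel, g0, norm_zero] at hx
    have := le_antisymm hx (norm_nonneg _)
    have h0 : 2 • g x + 2 • g x - g (x + x) = 0 := norm_eq_zero.mp this
    have : g (x + x) = 2 • g x + 2 • g x := by
      rw [← sub_eq_zero]; rw [← neg_eq_zero, neg_sub]; exact h0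
    rw [this]; abel
  intro x y
  set a := g (x + y) with ha
  set b := g (x - y) with hb
  set c := 2 • g x + 2 • g y with hc
  -- first pair
  have h1 : ‖c - b‖ ≤ ‖a‖ := h x y
  have h2 : ‖c - a‖ ≤ ‖b‖ := by
    have := h x (-y)
    rw [heven, sub_neg_eq_add, ← sub_eq_add_neg] at this
    exact this
  have k1 : ‖c‖ ^ 2 ≤ ⟪c, a + b⟫ := sumineq a b c h1 h2
  -- doubled pair
  have h3 : ‖2 • a + 2 • b - (4 : ℝ) • g y‖ ≤ ‖(4 : ℝ) • g x‖ := by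
    have := h (x + y) (x - y)
    have e1 : x + y - (x - y) = y + y := by abel
    have e2 : x + y + (x - y) = x + x := by abel
    rw [e1, e2, hdbl, hdbl] at this
    simpa [← Nat.cast_smul_eq_nsmul ℝ] using this
  have h4 : ‖2 • a + 2 • b - (4 : ℝ) • g x‖ ≤ ‖(4 : ℝ) • g y‖ := by
    have := h (x + y) (y - x)
    have e1 : x + y - (y - x) = x + x := by abel
    have e2 : x + y + (y - x) = y + y := by abel
    have e3 : g (y - x) = b := by rw [← heven (y - x), neg_sub]
    rw [e1, e2, e3, hdbl, hdbl] at this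
    simpa [← Nat.cast_smul_eq_nsmul ℝ] using this
  have k2' : ‖(2:ℝ) • (a + b)‖ ^ 2 ≤ ⟪(2:ℝ) • (a + b), (4:ℝ) • g x + (4:ℝ) • g y⟫ := by
    have := sumineq ((4:ℝ) • g x) ((4:ℝ) • g y) ((2:ℝ) • (a + b)) ?_ ?_
    · exact this
    · have e : (2:ℝ) • (a + b) - (4:ℝ) • g y = 2 • a + 2 • b - (4:ℝ) • g y := by
        push_cast [← Nat.cast_smul_eq_nsmul ℝ]; module
      rw [e]; exact h3
    · have e : (2:ℝ) • (a + b) - (4:ℝ) • g x = 2 • a + 2 • b - (4:ℝ) • g x := by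
        push_cast [← Nat.cast_smul_eq_nsmul ℝ]; module
      rw [e]; exact h4
  have k2 : ‖a + b‖ ^ 2 ≤ ⟪a + b, c⟫ := by
    have e : (4:ℝ) • g x + (4:ℝ) • g y = (2:ℝ) • c := by
      rw [hc]; push_cast [← Nat.cast_smul_eq_nsmul ℝ]; module
    rw [e, norm_smul, real_inner_smul_left, real_inner_smul_right] at k2'
    simp at k2'
    nlinarith [k2']
  -- combine
  have kc : ‖c - (a + b)‖ ^ 2 ≤ 0 := by
    rw [norm_sub_sq_real]
    have := real_inner_comm c (a + b)
    nlinarith [k1, k2]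
  have : c - (a + b) = 0 := by
    have := le_antisymm (by nlinarith [sq_nonneg ‖c - (a+b)‖, norm_nonneg (c - (a+b))] : ‖c - (a+b)‖ ≤ 0) (norm_nonneg _)
    exact norm_eq_zero.mp this
  have : a + b = c := by rw [← sub_eq_zero, ← neg_eq_zero, neg_sub]; exact this
  exact this
end

section
/- If f satisfies the Drygas inequality and fᵉ satisfies the quadratic functional equation, then ‖fᵉ(x+y)+2fᵒ(x)-fᵒ(x-y)‖ ≤ ‖f(x+y)‖ for all x, y ∈ G. -/
theorem stmt8 {G E : Type*} [AddCommGroup G] [NormedAddCommGroup E]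
    [InnerProductSpace ℝ E] (f : G → E)
    (h : ∀ x y : G, ‖2 • f x + f y + f (-y) - f (x - y)‖ ≤ ‖f (x + y)‖)
    (fe fo : G → E) (hfe : ∀ x, fe x = (2 : ℝ)⁻¹ • (f x + f (-x)))
    (hfo : ∀ x, fo x = (2 : ℝ)⁻¹ • (f x - f (-x)))
    (hq : ∀ x y : G, fe (x + y) + fe (x - y) = 2 • fe x + 2 • fe y) :
    ∀ x y : G, ‖fe (x + y) + 2 • fo x - fo (x - y)‖ ≤ ‖f (x + y)‖ := by
  intro x y
  have hx := h x y
  have hq' := hq x y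
  have key : fe (x + y) + 2 • fo x - fo (x - y)
      = 2 • f x + f y + f (-y) - f (x - y) := by
    simp only [hfe, hfo] at hq' ⊢
    linear_combination (norm := module) hq'
  rw [key]
  exact hx
end

section
/- If f satisfies the Drygas inequality and fᵉ satisfies the quadratic functional equation, then ‖fᵉ(x+y)+fᵒ(x)+fᵒ(y)‖ ≤ ‖fᵉ(x+y)+fᵒ(x+y)‖ for all x, y ∈ G. -/
theorem stmt9 {G E : Type*} [AddCommGroup G] [NormedAddCommGroup E]
    [InnerProductSpace ℝ E] (f : G → E)
    (h : ∀ x y : G, ‖2 • f x + f y + f (-y) - f (x - y)‖ ≤ ‖f (x + y)‖)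
    (fe fo : G → E) (hfe : ∀ x, fe x = (2 : ℝ)⁻¹ • (f x + f (-x)))
    (hfo : ∀ x, fo x = (2 : ℝ)⁻¹ • (f x - f (-x)))
    (hq : ∀ x y : G, fe (x + y) + fe (x - y) = 2 • fe x + 2 • fe y) :
    ∀ x y : G, ‖fe (x + y) + fo x + fo y‖ ≤ ‖fe (x + y) + fo (x + y)‖ := by
  intro x y
  have hq1 : fe (x + y) = 2 • fe x + 2 • fe y - fe (x - y) := by
    rw [eq_sub_iff_add_eq]; exact hq x y
  have hq2 : fe (x + y) = 2 • fe y + 2 • fe x - fe (y - x) := by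
    rw [add_comm x y, eq_sub_iff_add_eq]; exact hq y x
  have e1 : 2 • f x + f y + f (-y) - f (x - y)
      = fe (x + y) + 2 • fo x - fo (x - y) := by
    rw [hq1]; simp only [hfe, hfo, neg_sub, neg_neg]; module
  have e2 : 2 • f y + f x + f (-x) - f (y - x)
      = fe (x + y) + 2 • fo y + fo (x - y) := by
    rw [hq2]; simp only [hfe, hfo, neg_sub, neg_neg]; module
  have e3 : f (x + y) = fe (x + y) + fo (x + y) := by
    rw [hfe, hfo]; module
  have ha := h x y
  have hb := h y x
  rw [e1] at ha
  rw [e2, add_comm y x] at hb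
  calc ‖fe (x + y) + fo x + fo y‖
      = ‖(2:ℝ)⁻¹ • ((fe (x + y) + 2 • fo x - fo (x - y))
          + (fe (x + y) + 2 • fo y + fo (x - y)))‖ := by
        congr 1; module
    _ ≤ (2:ℝ)⁻¹ * (‖fe (x + y) + 2 • fo x - fo (x - y)‖
          + ‖fe (x + y) + 2 • fo y + fo (x - y)‖) := by
        rw [norm_smul, Real.norm_eq_abs, abs_of_pos (by norm_num : (0:ℝ) < 2⁻¹)]
        exact mul_le_mul_of_nonneg_left (norm_add_le _ _) (by norm_num)
    _ ≤ (2:ℝ)⁻¹ * (‖f (x + y)‖ + ‖f (x + y)‖) := by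
        gcongr
    _ = ‖fe (x + y) + fo (x + y)‖ := by rw [← e3]; ring
end

section
/- If the odd part fᵒ of f satisfies ‖fᵒ(x)+fᵒ(y)‖ ≤ ‖fᵒ(x+y)‖ for all x, y ∈ G, then fᵒ is additive: fᵒ(x+y) = fᵒ(x)+fᵒ(y) for all x, y ∈ G. -/
/-!
Substituting `(0, 0)` and `(x, -x)` shows that `h 0 = 0` and that `h` is odd. For `u = h (x + y)`,
oddness turns the pairs `(x + y, -x)` and `(x + y, -y)` into `‖u - h x‖ ≤ ‖h y‖` and
`‖u - h y‖ ≤ ‖h x‖`; in an inner product space these two inequalities together with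
`‖h x + h y‖ ≤ ‖u‖` force `u = h x + h y`.
-/

theorem eq_add_of_norm_sub_le_of_norm_add_le {E : Type*} [NormedAddCommGroup E]
    [InnerProductSpace ℝ E] {u a b : E} (hua : ‖u - a‖ ≤ ‖b‖) (hub : ‖u - b‖ ≤ ‖a‖)
    (hab : ‖a + b‖ ≤ ‖u‖) : u = a + b := by
  have sq_le {v w : E} (hvw : ‖v‖ ≤ ‖w‖) : ‖v‖ ^ 2 ≤ ‖w‖ ^ 2 :=
    pow_le_pow_left₀ (norm_nonneg v) hvw 2
  have hua := sq_le hua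
  have hub := sq_le hub
  have hab := sq_le hab
  rw [norm_sub_sq_real] at hua hub
  -- Adding the two expanded inequalities gives `‖u‖² ≤ ⟪u, a + b⟫_ℝ`.
  have hsq : ‖u - (a + b)‖ ^ 2 ≤ 0 := by
    rw [norm_sub_sq_real, inner_add_right]
    linarith
  rw [← sub_eq_zero, ← norm_eq_zero]
  exact pow_eq_zero_iff two_ne_zero |>.mp (le_antisymm hsq (sq_nonneg _))

section

variable {G E : Type*} [AddCommGroup G] [NormedAddCommGroup E] {h : G → E}

theorem map_zero_of_norm_add_le [NormedSpace ℝ E] (hh : ∀ x y : G, ‖h x + h y‖ ≤ ‖h (x + y)‖) :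
    h 0 = 0 := by
  have h00 := hh 0 0
  rw [add_zero, ← two_smul ℝ, norm_smul, Real.norm_two] at h00
  exact norm_le_zero_iff.mp (by linarith)

theorem map_neg_of_norm_add_le (h0 : h 0 = 0) (hh : ∀ x y : G, ‖h x + h y‖ ≤ ‖h (x + y)‖)
    (x : G) : h (-x) = -h x := by
  have hx := hh x (-x)
  rw [add_neg_cancel, h0, norm_zero, norm_le_zero_iff] at hx
  exact eq_neg_of_add_eq_zero_right hx

end

theorem stmt11 {G E : Type*} [AddCommGroup G] [NormedAddCommGroup E]
    [InnerProductSpace ℝ E] (h : G → E)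
    (hh : ∀ x y : G, ‖h x + h y‖ ≤ ‖h (x + y)‖) :
    ∀ x y : G, h (x + y) = h x + h y := by
  have hneg := map_neg_of_norm_add_le (map_zero_of_norm_add_le hh) hh
  intro x y
  apply eq_add_of_norm_sub_le_of_norm_add_le _ _ (hh x y)
  · simpa [hneg, sub_eq_add_neg] using hh (x + y) (-x)
  · simpa [hneg, sub_eq_add_neg] using hh (x + y) (-y)
end

section
/- If f satisfies the Drygas inequality, then the odd part fᵒ satisfies ‖fᵒ(x)+fᵒ(y)‖ ≤ ‖fᵒ(x+y)‖ for all x, y ∈ G. -/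
/-!
Pairing the Drygas inequality at `(x, y)` with the one at `(-x, -y)` and applying the
parallelogram law separates the even part `fₑ` from the odd part `fₒ`:
`‖2fₑ(x) + 2fₑ(y) - fₑ(x - y)‖² + ‖2fₒ(x) - fₒ(x - y)‖² ≤ ‖fₑ(x + y)‖² + ‖fₒ(x + y)‖²`.
Putting `y = -x` in the Drygas inequality gives `f(2x) = 3f(x) + f(-x)`, hence `fₑ(2x) = 4fₑ(x)` and
`fₒ(2x) = 2fₒ(x)`. Six instances of the split inequality then add up to
`‖fₒ(x) + fₒ(y)‖² ≤ ⟪fₒ(x) + fₒ(y), fₒ(x + y)⟫`, and Cauchy–Schwarz concludes.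
-/
open scoped RealInnerProductSpace

section Parts

variable {G E : Type*} [AddCommGroup E] [Module ℝ E]

noncomputable def evenPart [Neg G] (f : G → E) (x : G) : E := (2 : ℝ)⁻¹ • (f x + f (-x))

noncomputable def oddPart [Neg G] (f : G → E) (x : G) : E := (2 : ℝ)⁻¹ • (f x - f (-x))

theorem evenPart_add_oddPart [Neg G] (f : G → E) (x : G) : evenPart f x + oddPart f x = f x := by
  unfold evenPart oddPart
  module

theorem evenPart_sub_oddPart [Neg G] (f : G → E) (x : G) :
    evenPart f x - oddPart f x = f (-x) := by
  unfold evenPart oddPart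
  module

variable [InvolutiveNeg G] (f : G → E)

theorem evenPart_neg (x : G) : evenPart f (-x) = evenPart f x := by
  simp only [evenPart, neg_neg, add_comm]

theorem oddPart_neg (x : G) : oddPart f (-x) = -oddPart f x := by
  simp only [oddPart, neg_neg, ← smul_neg, neg_sub]

end Parts

section Doubling

variable {G E : Type*} [AddGroup G] [AddCommGroup E] [Module ℝ E] {f : G → E}

theorem evenPart_add_self (hf : ∀ x, f (x + x) = 3 • f x + f (-x)) (x : G) :
    evenPart f (x + x) = 4 • evenPart f x := by
  have h₂ := hf (-x)
  rw [neg_neg] at h₂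
  rw [evenPart, neg_add_rev, hf, h₂, evenPart]
  module

theorem oddPart_add_self (hf : ∀ x, f (x + x) = 3 • f x + f (-x)) (x : G) :
    oddPart f (x + x) = 2 • oddPart f x := by
  have h₂ := hf (-x)
  rw [neg_neg] at h₂
  rw [oddPart, neg_add_rev, hf, h₂, oddPart]
  module

end Doubling

section InnerProduct

variable {E : Type*} [NormedAddCommGroup E] [InnerProductSpace ℝ E]

theorem sq_norm_add_sq_norm_le_of_norm_add_le_of_norm_sub_le {a b c d : E}
    (h₁ : ‖a + b‖ ≤ ‖c + d‖) (h₂ : ‖a - b‖ ≤ ‖c - d‖) :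
    ‖a‖ ^ 2 + ‖b‖ ^ 2 ≤ ‖c‖ ^ 2 + ‖d‖ ^ 2 := by
  have h₁' := pow_le_pow_left₀ (norm_nonneg _) h₁ 2
  have h₂' := pow_le_pow_left₀ (norm_nonneg _) h₂ 2
  linarith [parallelogram_law_with_norm ℝ a b, parallelogram_law_with_norm ℝ c d]

theorem norm_le_of_sq_norm_le_inner {v w : E} (h : ‖v‖ ^ 2 ≤ ⟪v, w⟫) : ‖v‖ ≤ ‖w‖ := by
  have := h.trans (real_inner_le_norm v w)
  rcases (norm_nonneg v).eq_or_lt with hv | hv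
  · rw [← hv]; exact norm_nonneg w
  · nlinarith

/-- Read `ex, ey, es, ed` and `a, b, s, t` as the even and odd parts of `f` at `x, y, x + y, x - y`;
the hypotheses are `DrygasIneq.sq_norm_evenPart_add_sq_norm_oddPart_le` at `(x, y)`, `(x, -y)`,
`(y, x)`, `(y, -x)`, `(x - y, x + y)`, `(x - y, -(x + y))`. -/
theorem sq_norm_add_le_inner_of_split_drygas {ex ey es ed a b s t : E}
    (h₁ : ‖2 • ex + 2 • ey - ed‖ ^ 2 + ‖2 • a - t‖ ^ 2 ≤ ‖es‖ ^ 2 + ‖s‖ ^ 2)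
    (h₂ : ‖2 • ex + 2 • ey - es‖ ^ 2 + ‖2 • a - s‖ ^ 2 ≤ ‖ed‖ ^ 2 + ‖t‖ ^ 2)
    (h₃ : ‖2 • ey + 2 • ex - ed‖ ^ 2 + ‖2 • b + t‖ ^ 2 ≤ ‖es‖ ^ 2 + ‖s‖ ^ 2)
    (h₄ : ‖2 • ey + 2 • ex - es‖ ^ 2 + ‖2 • b - s‖ ^ 2 ≤ ‖ed‖ ^ 2 + ‖t‖ ^ 2)
    (h₅ : ‖2 • ed + 2 • es - 4 • ey‖ ^ 2 + ‖2 • t + 2 • b‖ ^ 2 ≤ ‖4 • ex‖ ^ 2 + ‖2 • a‖ ^ 2)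
    (h₆ : ‖2 • ed + 2 • es - 4 • ex‖ ^ 2 + ‖2 • t - 2 • a‖ ^ 2 ≤ ‖4 • ey‖ ^ 2 + ‖2 • b‖ ^ 2) :
    ‖a + b‖ ^ 2 ≤ ⟪a + b, s⟫ := by
  -- The slack is the sum of the defects of the quadratic and of the additive equation.
  linear_combination (norm := skip) (2 * h₁ + 2 * h₂ + 2 * h₃ + 2 * h₄ + h₅ + h₆
    + 8 * sq_nonneg ‖2 • ex + 2 • ey - es - ed‖ + 8 * sq_nonneg ‖t - a + b‖) / 8
  simp only [← Nat.cast_smul_eq_nsmul ℝ, ← real_inner_self_eq_norm_sq, inner_add_left,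
    inner_add_right, inner_sub_left, inner_sub_right, real_inner_smul_right, real_inner_comm]
  ring_nf
  exact le_rfl

end InnerProduct

def DrygasIneq {G E : Type*} [AddGroup G] [Norm E] [AddCommGroup E] (f : G → E) : Prop :=
  ∀ x y, ‖2 • f x + f y + f (-y) - f (x - y)‖ ≤ ‖f (x + y)‖

namespace DrygasIneq

section NormedSpace

variable {G E : Type*} [AddGroup G] [NormedAddCommGroup E] [NormedSpace ℝ E] {f : G → E}

theorem map_zero (h : DrygasIneq f) : f 0 = 0 := by
  have h₀ := h 0 0
  rw [neg_zero, sub_zero, add_zero,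
    show 2 • f 0 + f 0 + f 0 - f 0 = (3 : ℝ) • f 0 by module, norm_smul] at h₀
  norm_num at h₀
  exact norm_le_zero_iff.mp (by linarith [norm_nonneg (f 0)])

theorem map_add_self (h : DrygasIneq f) (x : G) : f (x + x) = 3 • f x + f (-x) := by
  have h₀ := h x (-x)
  rw [sub_neg_eq_add, add_neg_cancel, h.map_zero, norm_zero, norm_le_zero_iff, neg_neg,
    sub_eq_zero] at h₀
  rw [← h₀]
  module

end NormedSpace

variable {G E : Type*} [AddCommGroup G] [NormedAddCommGroup E] [InnerProductSpace ℝ E] {f : G → E}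

theorem sq_norm_evenPart_add_sq_norm_oddPart_le (h : DrygasIneq f) (x y : G) :
    ‖2 • evenPart f x + 2 • evenPart f y - evenPart f (x - y)‖ ^ 2
        + ‖2 • oddPart f x - oddPart f (x - y)‖ ^ 2
      ≤ ‖evenPart f (x + y)‖ ^ 2 + ‖oddPart f (x + y)‖ ^ 2 := by
  apply sq_norm_add_sq_norm_le_of_norm_add_le_of_norm_sub_le
  · convert h x y using 2
    · simp only [← evenPart_add_oddPart f, evenPart_neg, oddPart_neg]
      module
    · exact evenPart_add_oddPart f _
  · have hneg := h (-x) (-y)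
    rw [neg_neg, ← neg_add, show -x - -y = -(x - y) by abel] at hneg
    convert hneg using 2
    · simp only [← evenPart_add_oddPart f, evenPart_neg, oddPart_neg]
      module
    · exact evenPart_sub_oddPart f _

theorem sq_norm_oddPart_add_le_inner (h : DrygasIneq f) (x y : G) :
    ‖oddPart f x + oddPart f y‖ ^ 2 ≤ ⟪oddPart f x + oddPart f y, oddPart f (x + y)⟫ := by
  have split := h.sq_norm_evenPart_add_sq_norm_oddPart_le
  have ev₂ := evenPart_add_self h.map_add_self
  have od₂ := oddPart_add_self h.map_add_self
  have h₂ := split x (-y)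
  rw [sub_neg_eq_add, ← sub_eq_add_neg, evenPart_neg] at h₂
  have h₃ := split y x
  rw [← neg_sub x y, evenPart_neg, oddPart_neg, sub_neg_eq_add, add_comm y x] at h₃
  have h₄ := split y (-x)
  rw [evenPart_neg, sub_neg_eq_add, add_comm y x, ← sub_eq_add_neg, ← neg_sub x y, evenPart_neg,
    oddPart_neg, norm_neg] at h₄
  have h₅ := split (x - y) (x + y)
  rw [show x - y - (x + y) = -(y + y) by abel, show x - y + (x + y) = x + x by abel, evenPart_neg,
    oddPart_neg, ev₂, od₂, ev₂, od₂, sub_neg_eq_add] at h₅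
  have h₆ := split (x - y) (-(x + y))
  rw [show x - y - -(x + y) = x + x by abel, show x - y + -(x + y) = -(y + y) by abel,
    evenPart_neg, evenPart_neg, oddPart_neg, norm_neg, ev₂, od₂, ev₂, od₂] at h₆
  exact sq_norm_add_le_inner_of_split_drygas (split x y) h₂ h₃ h₄ h₅ h₆

end DrygasIneq

theorem stmt12 {G E : Type*} [AddCommGroup G] [NormedAddCommGroup E]
    [InnerProductSpace ℝ E] (f : G → E)
    (h : ∀ x y : G, ‖2 • f x + f y + f (-y) - f (x - y)‖ ≤ ‖f (x + y)‖)
    (fo : G → E) (hfo : ∀ x, fo x = (2 : ℝ)⁻¹ • (f x - f (-x))) :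
    ∀ x y : G, ‖fo x + fo y‖ ≤ ‖fo (x + y)‖ := by
  obtain rfl : fo = oddPart f := funext hfo
  exact fun x y => norm_le_of_sq_norm_le_inner (DrygasIneq.sq_norm_oddPart_add_le_inner h x y)
end

section
/- Main theorem: Let G be an abelian group, E a real inner product space, and f : G → E a function satisfying ‖2f(x)+f(y)+f(-y)-f(x-y)‖ ≤ ‖f(x+y)‖ for all x, y ∈ G. Then f satisfies the Drygas functional equation f(x+y)+f(x-y) = 2f(x)+f(y)+f(-y) for all x, y ∈ G. -/
open RealInnerProductSpace

set_option maxHeartbeats 2000000 in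
theorem stmt13 {G E : Type*} [AddCommGroup G] [NormedAddCommGroup E]
    [InnerProductSpace ℝ E] (f : G → E)
    (h : ∀ x y : G, ‖2 • f x + f y + f (-y) - f (x - y)‖ ≤ ‖f (x + y)‖) :
    ∀ x y : G, f (x + y) + f (x - y) = 2 • f x + f y + f (-y) := by
  have sqle : ∀ a b : E, ‖a‖ ≤ ‖b‖ → ‖a‖ ^ 2 ≤ ‖b‖ ^ 2 := fun a b hab =>
    pow_le_pow_left₀ (norm_nonneg a) hab 2
  -- f 0 = 0
  have h0 : f 0 = 0 := by
    have h1 := h 0 0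
    simp only [neg_zero, sub_zero, add_zero] at h1
    rw [show (2:ℕ) • f 0 + f 0 + f 0 - f 0 = f 0 + f 0 + f 0 by rw [two_smul]; abel] at h1
    have q1 := sqle _ _ h1
    rw [← real_inner_self_eq_norm_sq, ← real_inner_self_eq_norm_sq] at q1
    simp only [inner_add_left, inner_add_right] at q1
    rw [← inner_self_eq_zero (𝕜 := ℝ) (x := f 0)]
    have := real_inner_self_nonneg (x := f 0)
    linarith
  -- doubling
  have hd : ∀ z : G, f (z + z) = f z + f z + f z + f (-z) := by
    intro z
    have h1 := h z (-z)
    rw [neg_neg, sub_neg_eq_add, add_neg_cancel, h0, norm_zero, norm_le_zero_iff] at h1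
    have h2 : f (z + z) = 2 • f z + f (-z) + f z := by
      rw [← sub_eq_zero]
      rw [← neg_sub]
      rw [h1, neg_zero]
    rw [h2, two_smul]; abel
  -- key inequality from hypothesis at (s,t) and (s,-t)
  have key : ∀ s t : G, ‖f s + f s + f t + f (-t)‖ ^ 2 ≤
      ⟪f s + f s + f t + f (-t), f (s + t)⟫ + ⟪f s + f s + f t + f (-t), f (s - t)⟫ := by
    intro s t
    have h1 := h s t
    have h2 := h s (-t)
    rw [neg_neg, sub_neg_eq_add, ← sub_eq_add_neg] at h2
    have q1 := sqle _ _ h1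
    have q2 := sqle _ _ h2
    rw [two_smul, norm_sub_sq_real] at q1 q2
    rw [show f s + f s + f (-t) + f t = f s + f s + f t + f (-t) by abel] at q2
    linarith
  -- combined core inequality
  have Lcomb : ∀ s t : G,
      4 * ⟪f (s + t) + f (-(s + t)) + f (s - t) + f (-(s - t)) - f s - f s - f (-s) - f (-s) - f t - f t - f (-t) - f (-t), f (s + t) + f (-(s + t)) + f (s - t) + f (-(s - t)) - f s - f s - f (-s) - f (-s) - f t - f t - f (-t) - f (-t)⟫ + 4 * ⟪f s + f (-s) + f t + f (-t), f (s + t) + f (-(s + t)) + f (s - t) + f (-(s - t)) - f s - f s - f (-s) - f (-s) - f t - f t - f (-t) - f (-t)⟫ + ⟪f (s + t) + f (s - t) - f (-(s + t)) - f (-(s - t)) - f s - f s + f (-s) + f (-s), f (s + t) + f (s - t) - f (-(s + t)) - f (-(s - t)) - f s - f s + f (-s) + f (-s)⟫ + ⟪f (s + t) - f (s - t) + f (-(s - t)) - f (-(s + t)) - f t - f t + f (-t) + f (-t), f (s + t) - f (s - t) + f (-(s - t)) - f (-(s + t)) - f t - f t + f (-t) + f (-t)⟫ ≤ 0 := by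
    intro s t
    have K1 := key s t
    have K2 := key t s
    rw [show t + s = s + t from add_comm t s, show t - s = -(s - t) by abel] at K2
    have K3 := key (-s) (-t)
    rw [neg_neg, show -s + -t = -(s + t) by abel, show -s - -t = -(s - t) by abel] at K3
    have K4 := key (-t) (-s)
    rw [neg_neg, show -t + -s = -(s + t) by abel, show -t - -s = s - t by abel] at K4
    have K5 := key (s + t) (s - t)
    rw [show s + t + (s - t) = s + s by abel, show s + t - (s - t) = t + t by abel,
      hd s, hd t] at K5
    have K6 := key (-(s + t)) (s - t)
    rw [show -(s + t) + (s - t) = -t + -t by abel, show -(s + t) - (s - t) = -s + -s by abel,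
      hd (-t), hd (-s), neg_neg t, neg_neg s] at K6
    have K7 := key (s - t) (s + t)
    rw [show s - t + (s + t) = s + s by abel, show s - t - (s + t) = -t + -t by abel,
      hd s, hd (-t), neg_neg t] at K7
    have K8 := key (-(s - t)) (s + t)
    rw [show -(s - t) + (s + t) = t + t by abel, show -(s - t) - (s + t) = -s + -s by abel,
      hd t, hd (-s), neg_neg s] at K8
    rw [← real_inner_self_eq_norm_sq] at K1 K2 K3 K4 K5 K6 K7 K8
    simp only [inner_add_left, inner_add_right, inner_sub_left, inner_sub_right,
      real_inner_comm] at K1 K2 K3 K4 K5 K6 K7 K8 ⊢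
    linarith
  -- L1
  have L1 : ∀ s t : G, ⟪f (s + t) + f (-(s + t)) + f (s - t) + f (-(s - t)) - f s - f s - f (-s) - f (-s) - f t - f t - f (-t) - f (-t), f (s + t) + f (-(s + t)) + f (s - t) + f (-(s - t)) - f s - f s - f (-s) - f (-s) - f t - f t - f (-t) - f (-t)⟫ + ⟪f s + f (-s) + f t + f (-t), f (s + t) + f (-(s + t)) + f (s - t) + f (-(s - t)) - f s - f s - f (-s) - f (-s) - f t - f t - f (-t) - f (-t)⟫ ≤ 0 := by
    intro s t
    have hc := Lcomb s t
    have n1 : (0:ℝ) ≤ ⟪f (s + t) + f (s - t) - f (-(s + t)) - f (-(s - t)) - f s - f s + f (-s) + f (-s), f (s + t) + f (s - t) - f (-(s + t)) - f (-(s - t)) - f s - f s + f (-s) + f (-s)⟫ := real_inner_self_nonneg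
    have n2 : (0:ℝ) ≤ ⟪f (s + t) - f (s - t) + f (-(s - t)) - f (-(s + t)) - f t - f t + f (-t) + f (-t), f (s + t) - f (s - t) + f (-(s - t)) - f (-(s + t)) - f t - f t + f (-t) + f (-t)⟫ := real_inner_self_nonneg
    linarith
  -- the even part satisfies the quadratic-type equation
  have Qeq : ∀ s t : G, f (s + t) + f (-(s + t)) + f (s - t) + f (-(s - t)) - f s - f s - f (-s) - f (-s) - f t - f t - f (-t) - f (-t) = 0 := by
    intro s t
    have P1 := L1 s t
    have P2 := L1 (s + t) (s - t)
    rw [show s + t + (s - t) = s + s by abel, show s + t - (s - t) = t + t by abel,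
      show -(s + s) = -s + -s by abel, show -(t + t) = -t + -t by abel,
      hd s, hd t, hd (-s), hd (-t), neg_neg s, neg_neg t] at P2
    have hq : ⟪f (s + t) + f (-(s + t)) + f (s - t) + f (-(s - t)) - f s - f s - f (-s) - f (-s) - f t - f t - f (-t) - f (-t), f (s + t) + f (-(s + t)) + f (s - t) + f (-(s - t)) - f s - f s - f (-s) - f (-s) - f t - f t - f (-t) - f (-t)⟫ = 0 := by
      refine le_antisymm ?_ real_inner_self_nonneg
      simp only [inner_add_left, inner_add_right, inner_sub_left, inner_sub_right,
        real_inner_comm] at P1 P2 ⊢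
      linarith
    exact inner_self_eq_zero.mp hq
  -- refined even-part identities
  have hz : ∀ s t : G, (f (s + t) + f (s - t) - f (-(s + t)) - f (-(s - t)) - f s - f s + f (-s) + f (-s) = 0 ∧ f (s + t) - f (s - t) + f (-(s - t)) - f (-(s + t)) - f t - f t + f (-t) + f (-t) = 0) := by
    intro s t
    have hc := Lcomb s t
    rw [Qeq s t] at hc
    simp only [inner_zero_right, mul_zero, zero_add, add_zero] at hc
    have n1 : (0:ℝ) ≤ ⟪f (s + t) + f (s - t) - f (-(s + t)) - f (-(s - t)) - f s - f s + f (-s) + f (-s), f (s + t) + f (s - t) - f (-(s + t)) - f (-(s - t)) - f s - f s + f (-s) + f (-s)⟫ := real_inner_self_nonneg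
    have n2 : (0:ℝ) ≤ ⟪f (s + t) - f (s - t) + f (-(s - t)) - f (-(s + t)) - f t - f t + f (-t) + f (-t), f (s + t) - f (s - t) + f (-(s - t)) - f (-(s + t)) - f t - f t + f (-t) + f (-t)⟫ := real_inner_self_nonneg
    constructor
    · exact inner_self_eq_zero.mp (le_antisymm (by linarith) real_inner_self_nonneg)
    · exact inner_self_eq_zero.mp (le_antisymm (by linarith) real_inner_self_nonneg)
  -- odd part identities
  have hodd : ∀ s t : G,
      (⟪f s - f (-s), f (s - t) - f (-(s - t)) - f s + f (-s) + f t - f (-t)⟫ = 0 ∧ ⟪f t - f (-t), f (s - t) - f (-(s - t)) - f s + f (-s) + f t - f (-t)⟫ = 0) := by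
    intro s t
    have K1 := key s t
    have K2 := key t s
    rw [show t + s = s + t from add_comm t s, show t - s = -(s - t) by abel] at K2
    have K3 := key (-s) (-t)
    rw [neg_neg, show -s + -t = -(s + t) by abel, show -s - -t = -(s - t) by abel] at K3
    have K4 := key (-t) (-s)
    rw [neg_neg, show -t + -s = -(s + t) by abel, show -t - -s = s - t by abel] at K4
    have e1 : ⟪f s + f s + f t + f (-t), f (s + t) + f (-(s + t)) + f (s - t) + f (-(s - t)) - f s - f s - f (-s) - f (-s) - f t - f t - f (-t) - f (-t)⟫ = 0 := by rw [Qeq s t]; exact inner_zero_right _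
    have e2 : ⟪f s + f s + f t + f (-t), f (s + t) + f (s - t) - f (-(s + t)) - f (-(s - t)) - f s - f s + f (-s) + f (-s)⟫ = 0 := by rw [(hz s t).1]; exact inner_zero_right _
    have e3 : ⟪f s + f s + f t + f (-t), f (s + t) - f (s - t) + f (-(s - t)) - f (-(s + t)) - f t - f t + f (-t) + f (-t)⟫ = 0 := by rw [(hz s t).2]; exact inner_zero_right _
    have e4 : ⟪f t + f t + f s + f (-s), f (s + t) + f (-(s + t)) + f (s - t) + f (-(s - t)) - f s - f s - f (-s) - f (-s) - f t - f t - f (-t) - f (-t)⟫ = 0 := by rw [Qeq s t]; exact inner_zero_right _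
    have e5 : ⟪f t + f t + f s + f (-s), f (s + t) + f (s - t) - f (-(s + t)) - f (-(s - t)) - f s - f s + f (-s) + f (-s)⟫ = 0 := by rw [(hz s t).1]; exact inner_zero_right _
    have e6 : ⟪f t + f t + f s + f (-s), f (s + t) - f (s - t) + f (-(s - t)) - f (-(s + t)) - f t - f t + f (-t) + f (-t)⟫ = 0 := by rw [(hz s t).2]; exact inner_zero_right _
    have e7 : ⟪f (-s) + f (-s) + f (-t) + f t, f (s + t) + f (-(s + t)) + f (s - t) + f (-(s - t)) - f s - f s - f (-s) - f (-s) - f t - f t - f (-t) - f (-t)⟫ = 0 := by rw [Qeq s t]; exact inner_zero_right _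
    have e8 : ⟪f (-s) + f (-s) + f (-t) + f t, f (s + t) + f (s - t) - f (-(s + t)) - f (-(s - t)) - f s - f s + f (-s) + f (-s)⟫ = 0 := by rw [(hz s t).1]; exact inner_zero_right _
    have e9 : ⟪f (-s) + f (-s) + f (-t) + f t, f (s + t) - f (s - t) + f (-(s - t)) - f (-(s + t)) - f t - f t + f (-t) + f (-t)⟫ = 0 := by rw [(hz s t).2]; exact inner_zero_right _
    have e10 : ⟪f (-t) + f (-t) + f (-s) + f s, f (s + t) + f (-(s + t)) + f (s - t) + f (-(s - t)) - f s - f s - f (-s) - f (-s) - f t - f t - f (-t) - f (-t)⟫ = 0 := by rw [Qeq s t]; exact inner_zero_right _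
    have e11 : ⟪f (-t) + f (-t) + f (-s) + f s, f (s + t) + f (s - t) - f (-(s + t)) - f (-(s - t)) - f s - f s + f (-s) + f (-s)⟫ = 0 := by rw [(hz s t).1]; exact inner_zero_right _
    have e12 : ⟪f (-t) + f (-t) + f (-s) + f s, f (s + t) - f (s - t) + f (-(s - t)) - f (-(s + t)) - f t - f t + f (-t) + f (-t)⟫ = 0 := by rw [(hz s t).2]; exact inner_zero_right _
    rw [← real_inner_self_eq_norm_sq] at K1 K2 K3 K4
    constructor <;>
    · simp only [inner_add_left, inner_add_right, inner_sub_left, inner_sub_right,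
        real_inner_comm] at K1 K2 K3 K4 e1 e2 e3 e4 e5 e6 e7 e8 e9 e10 e11 e12 ⊢
      linarith
  -- the odd part is additive: E s t = 0
  have hE : ∀ s t : G, f (s - t) - f (-(s - t)) - f s + f (-s) + f t - f (-t) = 0 := by
    intro s t
    have e1 := (hodd s t).1
    have e2 := (hodd s t).2
    have e3 := (hodd s (s - t)).2
    rw [show s - (s - t) = t by abel] at e3
    have hq : ⟪f (s - t) - f (-(s - t)) - f s + f (-s) + f t - f (-t), f (s - t) - f (-(s - t)) - f s + f (-s) + f t - f (-t)⟫ = 0 := by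
      simp only [inner_add_left, inner_add_right, inner_sub_left, inner_sub_right,
        real_inner_comm] at e1 e2 e3 ⊢
      linarith
    exact inner_self_eq_zero.mp hq
  -- finish
  intro x y
  have hq := Qeq x y
  have h13 := (hz x y).1
  have h24 := (hz x y).2
  have he := hE x y
  have h4 : (4:ℝ) • (f (x + y) + f (x - y) - (f x + f x + f y + f (-y))) =
      (f (x + y) + f (-(x + y)) + f (x - y) + f (-(x - y)) - f x - f x - f (-x) - f (-x) - f y - f y - f (-y) - f (-y)) + (f (x + y) + f (-(x + y)) + f (x - y) + f (-(x - y)) - f x - f x - f (-x) - f (-x) - f y - f y - f (-y) - f (-y)) + (f (x + y) + f (x - y) - f (-(x + y)) - f (-(x - y)) - f x - f x + f (-x) + f (-x)) + (f (x + y) - f (x - y) + f (-(x - y)) - f (-(x + y)) - f y - f y + f (-y) + f (-y)) + (f (x - y) - f (-(x - y)) - f x + f (-x) + f y - f (-y)) + (f (x - y) - f (-(x - y)) - f x + f (-x) + f y - f (-y)) := by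
    module
  rw [hq, h13, h24, he] at h4
  simp only [add_zero, zero_add] at h4
  have hv := (smul_eq_zero.mp h4).resolve_left (by norm_num)
  rw [sub_eq_zero] at hv
  rw [two_smul]
  exact hv
end

section
/- Let G be a (not necessarily abelian) group, written multiplicatively, E a real inner product space, and f : G → E satisfying the Kannappan condition f(xyz) = f(yxz) for all x, y, z ∈ G. Then the inequality ‖2f(x)+f(y)+f(y⁻¹)-f(xy⁻¹)‖ ≤ ‖f(xy)‖ for all x, y ∈ G holds if and only if f satisfies f(xy)+f(xy⁻¹) = 2f(x)+f(y)+f(y⁻¹) for all x, y ∈ G. -/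
open scoped RealInnerProductSpace

namespace Stmt16Aux

variable {G E : Type*} [Group G] [NormedAddCommGroup E] [InnerProductSpace ℝ E]

/-- The Drygas difference. -/
def Dk (f : G → E) (x y : G) : E := f (x*y) + f (x*y⁻¹) - (2:ℝ)•f x - f y - f y⁻¹

/-- The odd difference. -/
def Hd (f : G → E) (w : G) : E := f w - f w⁻¹

noncomputable def al (n : ℕ) : ℝ := ((4:ℝ)^n + 2^n)/2
noncomputable def be (n : ℕ) : ℝ := ((4:ℝ)^n - 2^n)/2

lemma al_succ (n : ℕ) : al (n+1) = 3 * al n + be n := by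
  simp only [al, be, pow_succ]; ring

lemma be_succ (n : ℕ) : be (n+1) = al n + 3 * be n := by
  simp only [al, be, pow_succ]; ring

lemma lim_lemma (a b c : ℝ) (h : ∀ n : ℕ, a * ((2:ℝ)^n)^2 + b * (2:ℝ)^n + c ≤ 0) :
    a ≤ 0 := by
  by_contra hca
  push_neg at hca
  obtain ⟨n, hn⟩ := pow_unbounded_of_one_lt ((|b| + |c| + 1)/a) (by norm_num : (1:ℝ) < 2)
  have ht1 : (1:ℝ) ≤ 2^n := one_le_pow₀ (by norm_num)
  have hat : |b| + |c| + 1 < a * 2^n := by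
    rwa [div_lt_iff₀ hca, mul_comm] at hn
  have hb1 : -|b| ≤ b := neg_abs_le b
  have hc1 : -|c| ≤ c := neg_abs_le c
  have := h n
  nlinarith [abs_nonneg b, abs_nonneg c]

lemma div_t2 {a b c t : ℝ} (ht : 0 < t) (h : a*t^4 + b*t^3 + c*t^2 ≤ 0) :
    a*t^2 + b*t + c ≤ 0 := by
  have ht2 : 0 < t^2 := by positivity
  by_contra hz
  push_neg at hz
  have h2 : (0:ℝ) < (a*t^2 + b*t + c) * t^2 := mul_pos hz ht2
  nlinarith

lemma key_lim (P N u u' : E)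
    (H : ∀ n : ℕ, ‖al n • P + be n • N‖^2 ≤ 2*⟪al n • u + be n • u', al n • P + be n • N⟫) :
    ‖P+N‖^2 ≤ 2*⟪u+u', P+N⟫ := by
  have expand : ∀ (a b : ℝ), ‖a•P+b•N‖^2 - 2*⟪a•u+b•u', a•P+b•N⟫ =
      a^2*(⟪P,P⟫ - 2*⟪u,P⟫) + (a*b)*(⟪P,N⟫+⟪N,P⟫-2*⟪u,N⟫-2*⟪u',P⟫)
        + b^2*(⟪N,N⟫-2*⟪u',N⟫) := by
    intro a b
    rw [← real_inner_self_eq_norm_sq]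
    simp only [inner_add_left, inner_add_right, real_inner_smul_left, real_inner_smul_right]
    ring
  set A := ⟪P,P⟫ - 2*⟪u,P⟫ with hA
  set B := ⟪P,N⟫+⟪N,P⟫-2*⟪u,N⟫-2*⟪u',P⟫ with hB
  set C := ⟪N,N⟫-2*⟪u',N⟫ with hC
  have key : (A+B+C)/4 ≤ 0 := by
    apply lim_lemma _ ((2*A-2*C)/4) ((A-B+C)/4)
    intro n
    set t : ℝ := (2:ℝ)^n with hts
    have ht : (0:ℝ) < t := by positivity
    have h4 : (4:ℝ)^n = t^2 := by
      rw [hts, ← pow_mul, mul_comm, pow_mul]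
      norm_num
    have hal : al n = (t^2+t)/2 := by rw [al, h4]
    have hbe : be n = (t^2-t)/2 := by rw [be, h4]
    apply div_t2 ht
    have hEn := sub_nonpos.mpr (H n)
    rw [expand (al n) (be n), hal, hbe] at hEn
    calc (A+B+C)/4*t^4 + (2*A-2*C)/4*t^3 + (A-B+C)/4*t^2
        = ((t^2+t)/2)^2*A + (((t^2+t)/2)*((t^2-t)/2))*B + ((t^2-t)/2)^2*C := by ring
      _ ≤ 0 := hEn
  have e1 := expand 1 1
  simp only [one_smul, one_pow, one_mul, mul_one] at e1
  linarith [key, e1.symm.le, e1.le]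

section MainArg

variable (f : G → E)

lemma comm' (hk : ∀ x y z : G, f (x * y * z) = f (y * x * z)) (a b : G) :
    f (a*b) = f (b*a) := by simpa using hk a b 1

variable (hk : ∀ x y z : G, f (x * y * z) = f (y * x * z))
variable (hf : ∀ x y : G, ‖2 • f x + f y + f y⁻¹ - f (x * y⁻¹)‖ ≤ ‖f (x * y)‖)

include hf in
lemma f_one : f 1 = 0 := by
  have h := hf 1 1
  simp only [mul_one, inv_one] at h
  have e : 2 • f (1:G) + f 1 + f 1 - f 1 = (3:ℝ) • f 1 := by
    rw [two_smul]; module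
  rw [e, norm_smul] at h
  simp at h
  have : ‖f (1:G)‖ = 0 := by linarith [norm_nonneg (f (1:G))]
  simpa using this

include hf in
lemma f_sq (x : G) : f (x*x) = (3:ℝ) • f x + f x⁻¹ := by
  have h := hf x x⁻¹
  rw [inv_inv, mul_inv_cancel, f_one f hf] at h
  simp only [norm_zero] at h
  have h0 : 2 • f x + f x⁻¹ + f x - f (x*x) = 0 :=
    norm_le_zero_iff.mp h
  have : f (x*x) = 2 • f x + f x⁻¹ + f x := by
    rwa [sub_eq_zero, eq_comm] at h0
  rw [this, two_smul]; module

include hf in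
lemma hQ (x y : G) : ‖Dk f x y‖^2 ≤ 2 * ⟪f (x*y), Dk f x y⟫ := by
  have h := hf x y
  have e : 2 • f x + f y + f y⁻¹ - f (x * y⁻¹) = f (x*y) - Dk f x y := by
    rw [two_smul]; unfold Dk; rw [two_smul]; module
  rw [e] at h
  have h2 : ‖f (x*y) - Dk f x y‖^2 ≤ ‖f (x*y)‖^2 :=
    pow_le_pow_left₀ (norm_nonneg _) h 2
  rw [@norm_sub_sq_real] at h2
  linarith

include hk hf in
lemma ineqIV (x y : G) :
    ‖Dk f x y + Dk f y x‖^2 ≤ -(2*⟪f (x*x), Dk f x y + Dk f y x⟫) := by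
  have hD : Dk f (x*y) (y⁻¹*x) = -(Dk f x y + Dk f y x) := by
    unfold Dk
    have e1 : x*y*(y⁻¹*x) = x*x := by group
    have e2 : f (x*y*(y⁻¹*x)⁻¹) = f (y*y) := by
      have e : x*y*(y⁻¹*x)⁻¹ = x*y*(x⁻¹*y) := by group
      rw [e, hk x y (x⁻¹*y)]
      congr 1; group
    have e3 : f (y⁻¹*x) = f (x*y⁻¹) := comm' f hk _ _
    have e4 : f ((y⁻¹*x)⁻¹) = f (y*x⁻¹) := by
      have e : (y⁻¹*x)⁻¹ = x⁻¹*y := by group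
      rw [e]; exact comm' f hk _ _
    have e5 : f (y*x) = f (x*y) := comm' f hk _ _
    rw [e1, e2, e3, e4, e5, f_sq f hf x, f_sq f hf y]
    module
  have h := hQ f hf (x*y) (y⁻¹*x)
  rw [hD] at h
  rw [show x*y*(y⁻¹*x) = x*x from by group] at h
  rw [norm_neg, inner_neg_right] at h
  linarith

include hk hf in
lemma S2 : ∀ (n : ℕ) (x y : G),
    f (x^(2^n) * y^(2^n)) = al n • f (x*y) + be n • f ((x*y)⁻¹) := by
  intro n
  induction n with
  | zero => intro x y; simp [al, be]
  | succ n ih =>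
    intro x y
    set X := x^(2^n) with hX
    set Y := y^(2^n) with hY
    have e0 : x^(2^(n+1)) * y^(2^(n+1)) = X*X*(Y*Y) := by
      rw [hX, hY, ← pow_add, ← pow_add]
      congr 1 <;> ring_nf
    have e1 : f (X*X*(Y*Y)) = f (X*Y*(X*Y)) := by
      calc f (X*X*(Y*Y)) = f (X*X*Y*Y) := by rw [show X*X*(Y*Y) = X*X*Y*Y by group]
        _ = f (Y*(X*X)*Y) := hk (X*X) Y Y
        _ = f (Y*X*(X*Y)) := by rw [show Y*(X*X)*Y = Y*X*(X*Y) by group]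
        _ = f (X*Y*(X*Y)) := hk Y X (X*Y)
    have e2 : f ((X*Y)⁻¹) = f (x⁻¹^(2^n) * y⁻¹^(2^n)) := by
      rw [show (X*Y)⁻¹ = Y⁻¹*X⁻¹ by group]
      rw [comm' f hk Y⁻¹ X⁻¹]
      rw [hX, hY, ← inv_pow, ← inv_pow]
    have e3 : f (x⁻¹*y⁻¹) = f ((x*y)⁻¹) := by
      rw [comm' f hk x⁻¹ y⁻¹]; congr 1; group
    have e4 : f ((x⁻¹*y⁻¹)⁻¹) = f (x*y) := by
      rw [show (x⁻¹*y⁻¹)⁻¹ = y*x by group]; exact comm' f hk y x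
    rw [e0, e1, show X*Y*(X*Y) = (X*Y)*(X*Y) from rfl, f_sq f hf (X*Y), e2, ih x⁻¹ y⁻¹,
      e3, e4, ih x y, al_succ, be_succ]
    module

include hk hf in
lemma S1 (n : ℕ) (x : G) : f (x^(2^n)) = al n • f x + be n • f x⁻¹ := by
  have h := S2 f hk hf n x 1
  simpa using h

include hk hf in
lemma S3 (n : ℕ) (x y : G) :
    Dk f (x^(2^n)) (y^(2^n)) = al n • Dk f x y + be n • Dk f x⁻¹ y⁻¹ := by
  have b1 : (y^(2^n))⁻¹ = (y⁻¹)^(2^n) := (inv_pow y (2^n)).symm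
  unfold Dk
  rw [S2 f hk hf n x y, b1, S2 f hk hf n x y⁻¹, S1 f hk hf n x, S1 f hk hf n y⁻¹,
    S1 f hk hf n y]
  rw [show f ((x*y)⁻¹) = f (x⁻¹*y⁻¹) from by
      rw [show (x*y)⁻¹ = y⁻¹*x⁻¹ by group]; exact comm' f hk y⁻¹ x⁻¹,
    show f ((x*y⁻¹)⁻¹) = f (x⁻¹*y) from by
      rw [show (x*y⁻¹)⁻¹ = y*x⁻¹ by group]; exact comm' f hk y x⁻¹]
  simp only [inv_inv]
  module

include hk hf in
lemma L1 (x y : G) :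
    ‖Dk f x y + Dk f x⁻¹ y⁻¹‖^2
      ≤ 2*⟪f (x*y) + f ((x*y)⁻¹), Dk f x y + Dk f x⁻¹ y⁻¹⟫ := by
  apply key_lim
  intro n
  have h := hQ f hf (x^(2^n)) (y^(2^n))
  rw [S3 f hk hf n x y, S2 f hk hf n x y] at h
  exact h

include hk hf in
lemma L2 (x y : G) :
    ‖(Dk f x y + Dk f y x) + (Dk f x⁻¹ y⁻¹ + Dk f y⁻¹ x⁻¹)‖^2
      ≤ 2*⟪-((3:ℝ)•f x + f x⁻¹) + -(f x + (3:ℝ)•f x⁻¹),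
          (Dk f x y + Dk f y x) + (Dk f x⁻¹ y⁻¹ + Dk f y⁻¹ x⁻¹)⟫ := by
  apply key_lim
  intro n
  have h := ineqIV f hk hf (x^(2^n)) (y^(2^n))
  rw [S3 f hk hf n x y, S3 f hk hf n y x] at h
  have eS : al n • Dk f x y + be n • Dk f x⁻¹ y⁻¹ + (al n • Dk f y x + be n • Dk f y⁻¹ x⁻¹)
      = al n • (Dk f x y + Dk f y x) + be n • (Dk f x⁻¹ y⁻¹ + Dk f y⁻¹ x⁻¹) := by
    module
  rw [eS] at h
  rw [show x^(2^n) * x^(2^n) = x^(2^(n+1)) from by rw [← pow_add]; congr 1; ring] at h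
  rw [S1 f hk hf (n+1) x, al_succ, be_succ] at h
  have ev : al n • (-((3:ℝ)•f x + f x⁻¹)) + be n • (-(f x + (3:ℝ)•f x⁻¹))
      = -((3 * al n + be n) • f x + (al n + 3 * be n) • f x⁻¹) := by module
  rw [ev, inner_neg_left]
  linarith

include hk hf in
lemma evencase (x y : G) : Dk f x y + Dk f x⁻¹ y⁻¹ = 0 := by
  have idsym : Dk f y x + Dk f y⁻¹ x⁻¹ = Dk f x y + Dk f x⁻¹ y⁻¹ := by
    unfold Dk
    simp only [inv_inv]
    rw [comm' f hk y x, comm' f hk y x⁻¹, comm' f hk y⁻¹ x⁻¹, comm' f hk y⁻¹ x]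
    module
  have idinv : ∀ a b : G, Dk f a b⁻¹ = Dk f a b := by
    intro a b; unfold Dk; simp only [inv_inv]; module
  -- L2 in x-form
  have EvX : ‖Dk f x y + Dk f x⁻¹ y⁻¹‖^2
      ≤ -(4*⟪f x + f x⁻¹, Dk f x y + Dk f x⁻¹ y⁻¹⟫) := by
    have h := L2 f hk hf x y
    rw [show (Dk f x y + Dk f y x) + (Dk f x⁻¹ y⁻¹ + Dk f y⁻¹ x⁻¹)
        = (Dk f x y + Dk f x⁻¹ y⁻¹) + (Dk f y x + Dk f y⁻¹ x⁻¹) from by module,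
      idsym] at h
    rw [show (Dk f x y + Dk f x⁻¹ y⁻¹) + (Dk f x y + Dk f x⁻¹ y⁻¹)
        = (2:ℝ) • (Dk f x y + Dk f x⁻¹ y⁻¹) from by module,
      show -((3:ℝ)•f x + f x⁻¹) + -(f x + (3:ℝ)•f x⁻¹)
        = (-4:ℝ) • (f x + f x⁻¹) from by module] at h
    rw [norm_smul, real_inner_smul_left, real_inner_smul_right] at h
    simp only [Real.norm_ofNat] at h
    nlinarith [h]
  have EvY : ‖Dk f x y + Dk f x⁻¹ y⁻¹‖^2
      ≤ -(4*⟪f y + f y⁻¹, Dk f x y + Dk f x⁻¹ y⁻¹⟫) := by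
    have h := L2 f hk hf y x
    rw [show (Dk f y x + Dk f x y) + (Dk f y⁻¹ x⁻¹ + Dk f x⁻¹ y⁻¹)
        = (Dk f y x + Dk f y⁻¹ x⁻¹) + (Dk f x y + Dk f x⁻¹ y⁻¹) from by module,
      idsym] at h
    rw [show (Dk f x y + Dk f x⁻¹ y⁻¹) + (Dk f x y + Dk f x⁻¹ y⁻¹)
        = (2:ℝ) • (Dk f x y + Dk f x⁻¹ y⁻¹) from by module,
      show -((3:ℝ)•f y + f y⁻¹) + -(f y + (3:ℝ)•f y⁻¹)
        = (-4:ℝ) • (f y + f y⁻¹) from by module] at h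
    rw [norm_smul, real_inner_smul_left, real_inner_smul_right] at h
    simp only [Real.norm_ofNat] at h
    nlinarith [h]
  -- the two positive inequalities
  have l1 := L1 f hk hf x y
  have l2 := L1 f hk hf x y⁻¹
  rw [idinv x y, inv_inv, show Dk f x⁻¹ y = Dk f x⁻¹ y⁻¹ from (idinv x⁻¹ y⁻¹ ▸ by rw [inv_inv])] at l2
  have hsum : f (x*y) + f ((x*y)⁻¹) + (f (x*y⁻¹) + f ((x*y⁻¹)⁻¹))
      = (Dk f x y + Dk f x⁻¹ y⁻¹) + (2:ℝ) • (f x + f x⁻¹) + (2:ℝ) • (f y + f y⁻¹) := by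
    unfold Dk
    rw [show f ((x*y)⁻¹) = f (x⁻¹*y⁻¹) from by
        rw [show (x*y)⁻¹ = y⁻¹*x⁻¹ by group]; exact comm' f hk y⁻¹ x⁻¹,
      show f ((x*y⁻¹)⁻¹) = f (x⁻¹*y) from by
        rw [show (x*y⁻¹)⁻¹ = y*x⁻¹ by group]; exact comm' f hk y x⁻¹]
    simp only [inv_inv]
    module
  have hin : ⟪f (x*y) + f ((x*y)⁻¹), Dk f x y + Dk f x⁻¹ y⁻¹⟫
        + ⟪f (x*y⁻¹) + f ((x*y⁻¹)⁻¹), Dk f x y + Dk f x⁻¹ y⁻¹⟫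
      = ‖Dk f x y + Dk f x⁻¹ y⁻¹‖^2
        + 2*⟪f x + f x⁻¹, Dk f x y + Dk f x⁻¹ y⁻¹⟫
        + 2*⟪f y + f y⁻¹, Dk f x y + Dk f x⁻¹ y⁻¹⟫ := by
    rw [← inner_add_left, hsum]
    rw [inner_add_left, inner_add_left, real_inner_smul_left, real_inner_smul_left,
      real_inner_self_eq_norm_sq]
  have hzero : ‖Dk f x y + Dk f x⁻¹ y⁻¹‖^2 ≤ 0 := by linarith
  have : ‖Dk f x y + Dk f x⁻¹ y⁻¹‖ = 0 := by
    nlinarith [norm_nonneg (Dk f x y + Dk f x⁻¹ y⁻¹)]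
  exact norm_eq_zero.mp this

include hk hf in
lemma oS (x y : G) :
    Dk f x y + Dk f y x = Hd f (x*y) - Hd f x - Hd f y := by
  have he := evencase f hk hf x y
  have k : (Dk f x y + Dk f y x) - (Hd f (x*y) - Hd f x - Hd f y)
      = Dk f x y + Dk f x⁻¹ y⁻¹ := by
    unfold Dk Hd
    simp only [inv_inv]
    rw [comm' f hk y x, comm' f hk y x⁻¹,
      show f ((x*y)⁻¹) = f (x⁻¹*y⁻¹) from by
        rw [show (x*y)⁻¹ = y⁻¹*x⁻¹ by group]; exact comm' f hk y⁻¹ x⁻¹]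
    module
  rw [he] at k
  exact sub_eq_zero.mp k

include hk hf in
lemma oIVx (x y : G) :
    ‖Hd f (x*y) - Hd f x - Hd f y‖^2
      ≤ -(2*⟪Hd f x, Hd f (x*y) - Hd f x - Hd f y⟫) := by
  have h1 := ineqIV f hk hf x y
  rw [oS f hk hf x y] at h1
  have h2 := ineqIV f hk hf x⁻¹ y⁻¹
  rw [oS f hk hf x⁻¹ y⁻¹] at h2
  have eA : Hd f (x⁻¹*y⁻¹) - Hd f x⁻¹ - Hd f y⁻¹
      = -(Hd f (x*y) - Hd f x - Hd f y) := by
    unfold Hd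
    simp only [mul_inv_rev, inv_inv]
    rw [comm' f hk y x, comm' f hk y⁻¹ x⁻¹]
    module
  rw [eA, norm_neg, inner_neg_right] at h2
  rw [f_sq f hf x] at h1
  rw [f_sq f hf x⁻¹, inv_inv] at h2
  rw [inner_add_left, real_inner_smul_left] at h1 h2
  have e2 : ⟪Hd f x, Hd f (x*y) - Hd f x - Hd f y⟫
      = ⟪f x, Hd f (x*y) - Hd f x - Hd f y⟫ - ⟪f x⁻¹, Hd f (x*y) - Hd f x - Hd f y⟫ := by
    rw [← inner_sub_left]; rfl
  rw [e2]
  linarith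

include hk hf in
lemma oIVy (x y : G) :
    ‖Hd f (x*y) - Hd f x - Hd f y‖^2
      ≤ -(2*⟪Hd f y, Hd f (x*y) - Hd f x - Hd f y⟫) := by
  have h := oIVx f hk hf y x
  have eA : Hd f (y*x) - Hd f y - Hd f x = Hd f (x*y) - Hd f x - Hd f y := by
    unfold Hd
    simp only [mul_inv_rev]
    rw [comm' f hk y x, comm' f hk x⁻¹ y⁻¹]
    module
  rw [eA] at h
  exact h

include hk hf in
lemma oStar (x y : G) :
    ⟪Hd f (x*y), Hd f (x*y) - Hd f x - Hd f y⟫ ≤ 0 := by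
  have h1 := oIVx f hk hf x y
  have h2 := oIVy f hk hf x y
  have e : Hd f x + Hd f y = Hd f (x*y) - (Hd f (x*y) - Hd f x - Hd f y) := by module
  have hin : ⟪Hd f x, Hd f (x*y) - Hd f x - Hd f y⟫
        + ⟪Hd f y, Hd f (x*y) - Hd f x - Hd f y⟫
      = ⟪Hd f (x*y), Hd f (x*y) - Hd f x - Hd f y⟫
        - ‖Hd f (x*y) - Hd f x - Hd f y‖^2 := by
    rw [← inner_add_left, e, inner_sub_left, real_inner_self_eq_norm_sq]
  linarith

include hk hf in
lemma oZero (x y : G) : Hd f (x*y) - Hd f x - Hd f y = 0 := by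
  have hp := oStar f hk hf (x*y) y⁻¹
  rw [show x*y*y⁻¹ = x by group] at hp
  have eneg : Hd f x - Hd f (x*y) - Hd f y⁻¹ = -(Hd f (x*y) - Hd f x - Hd f y) := by
    unfold Hd
    simp only [inv_inv]
    module
  rw [eneg, inner_neg_right] at hp
  have hpos : 0 ≤ ⟪Hd f x, Hd f (x*y) - Hd f x - Hd f y⟫ := by linarith
  have h1 := oIVx f hk hf x y
  have : ‖Hd f (x*y) - Hd f x - Hd f y‖^2 ≤ 0 := by linarith
  have : ‖Hd f (x*y) - Hd f x - Hd f y‖ = 0 := by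
    nlinarith [norm_nonneg (Hd f (x*y) - Hd f x - Hd f y)]
  exact norm_eq_zero.mp this

include hk hf in
lemma Dk_zero (x y : G) : Dk f x y = 0 := by
  have hodd := oZero f hk hf x y
  have hodd2 := oZero f hk hf x y⁻¹
  have heven := evencase f hk hf x y
  have k : Dk f x y - Dk f x⁻¹ y⁻¹
      = (Hd f (x*y) - Hd f x - Hd f y) + (Hd f (x*y⁻¹) - Hd f x - Hd f y⁻¹) := by
    unfold Dk Hd
    simp only [mul_inv_rev, inv_inv]
    rw [comm' f hk y⁻¹ x⁻¹, comm' f hk y x⁻¹]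
    module
  rw [hodd, hodd2, add_zero] at k
  have keq : Dk f x y = Dk f x⁻¹ y⁻¹ := sub_eq_zero.mp k
  have h2 : (2:ℝ) • Dk f x y = 0 := by
    rw [two_smul, keq]
    calc Dk f x⁻¹ y⁻¹ + Dk f x⁻¹ y⁻¹ = Dk f x y + Dk f x⁻¹ y⁻¹ := by rw [keq]
      _ = 0 := heven
  rcases smul_eq_zero.mp h2 with h | h
  · norm_num at h
  · exact h

end MainArg
end Stmt16Aux

theorem stmt16 {G E : Type*} [Group G] [NormedAddCommGroup E]
    [InnerProductSpace ℝ E] (f : G → E)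
    (hk : ∀ x y z : G, f (x * y * z) = f (y * x * z)) :
    (∀ x y : G, ‖2 • f x + f y + f y⁻¹ - f (x * y⁻¹)‖ ≤ ‖f (x * y)‖) ↔
      (∀ x y : G, f (x * y) + f (x * y⁻¹) = 2 • f x + f y + f y⁻¹) := by
  constructor
  · intro hf x y
    have hD := Stmt16Aux.Dk_zero f hk hf x y
    have e : f (x*y) + f (x*y⁻¹) - (2 • f x + f y + f y⁻¹) = Stmt16Aux.Dk f x y := by
      unfold Stmt16Aux.Dk
      rw [two_smul ℕ (f x), two_smul ℝ (f x)]
      abel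
    exact sub_eq_zero.mp (e.trans hD)
  · intro h x y
    have e : 2 • f x + f y + f y⁻¹ - f (x*y⁻¹) = f (x*y) := by
      rw [← h x y]; abel
    rw [e]
end

section
/- Maksa–Volkmann theorem: Let G be a group and E an inner product space. If f : G → E satisfies ‖f(x)+f(y)‖ ≤ ‖f(xy)‖ for all x, y ∈ G, then f(xy) = f(x)+f(y) for all x, y ∈ G. -/
/-!
Testing the hypothesis at `(1, 1)`, `(x, x⁻¹)`, `(x * y, y⁻¹)` and `(x⁻¹, x * y)` shows that
`f 1 = 0`, `f x⁻¹ = -f x`, and that `a = f x`, `b = f y`, `c = f (x * y)` satisfy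
`‖a + b‖ ≤ ‖c‖`, `‖c - b‖ ≤ ‖a‖`, `‖c - a‖ ≤ ‖b‖`. In an inner product space these three
inequalities force `c = a + b`, by the identity
`‖c - (a + b)‖² + ‖c‖² + ‖a‖² + ‖b‖² = ‖a + b‖² + ‖c - a‖² + ‖c - b‖²`.
-/

open scoped RealInnerProductSpace

theorem norm_sub_add_sq_add_norm_sq_add_norm_sq_add_norm_sq {E : Type*}
    [NormedAddCommGroup E] [InnerProductSpace ℝ E] (a b c : E) :
    ‖c - (a + b)‖ ^ 2 + ‖c‖ ^ 2 + ‖a‖ ^ 2 + ‖b‖ ^ 2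
      = ‖a + b‖ ^ 2 + ‖c - a‖ ^ 2 + ‖c - b‖ ^ 2 := by
  simp only [norm_sub_sq_real, norm_add_sq_real, inner_add_right]
  ring

theorem eq_add_of_norm_add_le_of_norm_sub_le {E : Type*}
    [NormedAddCommGroup E] [InnerProductSpace ℝ E] {a b c : E}
    (hab : ‖a + b‖ ≤ ‖c‖) (hca : ‖c - a‖ ≤ ‖b‖) (hcb : ‖c - b‖ ≤ ‖a‖) : c = a + b := by
  have hab2 := pow_le_pow_left₀ (norm_nonneg _) hab 2
  have hca2 := pow_le_pow_left₀ (norm_nonneg _) hca 2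
  have hcb2 := pow_le_pow_left₀ (norm_nonneg _) hcb 2
  have hsq : ‖c - (a + b)‖ ^ 2 ≤ 0 := by
    linarith [norm_sub_add_sq_add_norm_sq_add_norm_sq_add_norm_sq a b c]
  rw [← sub_eq_zero, ← norm_eq_zero]
  exact pow_eq_zero_iff two_ne_zero |>.mp (le_antisymm hsq (sq_nonneg _))

section Superadditive

variable {G E : Type*} [Group G] [NormedAddCommGroup E] [NormedSpace ℝ E] {f : G → E}

theorem map_one_eq_zero_of_norm_add_le (h : ∀ x y : G, ‖f x + f y‖ ≤ ‖f (x * y)‖) :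
    f 1 = 0 := by
  have h11 := h 1 1
  rw [one_mul, ← two_smul ℝ, norm_smul, Real.norm_two] at h11
  exact norm_le_zero_iff.mp (by linarith [norm_nonneg (f 1)])

theorem map_inv_eq_neg_of_norm_add_le (h : ∀ x y : G, ‖f x + f y‖ ≤ ‖f (x * y)‖) (x : G) :
    f x⁻¹ = -f x := by
  have hx := h x x⁻¹
  rw [mul_inv_cancel, map_one_eq_zero_of_norm_add_le h, norm_zero, norm_le_zero_iff] at hx
  exact eq_neg_of_add_eq_zero_right hx

end Superadditive

theorem stmt17 {G E : Type*} [Group G] [NormedAddCommGroup E]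
    [InnerProductSpace ℝ E] (f : G → E)
    (h : ∀ x y : G, ‖f x + f y‖ ≤ ‖f (x * y)‖) :
    ∀ x y : G, f (x * y) = f x + f y := by
  intro x y
  have hca : ‖f (x * y) - f x‖ ≤ ‖f y‖ := by
    simpa only [inv_mul_cancel_left, map_inv_eq_neg_of_norm_add_le h, neg_add_eq_sub]
      using h x⁻¹ (x * y)
  have hcb : ‖f (x * y) - f y‖ ≤ ‖f x‖ := by
    simpa only [mul_inv_cancel_right, map_inv_eq_neg_of_norm_add_le h, ← sub_eq_add_neg]
      using h (x * y) y⁻¹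
  exact eq_add_of_norm_add_le_of_norm_sub_le (h x y) hca hcb
end

section
/- If f : G → E satisfies the Drygas inequality and additionally f is odd (f(-x) = -f(x)), then f is additive: f(x+y) = f(x)+f(y) for all x, y ∈ G. -/
/-!
Writing `u = f x`, `v = f y`, `w = f (x + y)`, oddness reduces the inequality to
`‖2 f x - f (x - y)‖ ≤ ‖f (x + y)‖`. Taking `y = -x` gives `f (x + x) = 2 f x`, and then
`(x + y, x - y)` gives `‖w - v‖ ≤ ‖u‖`, symmetrically `‖w - u‖ ≤ ‖v‖`, and `(x + y, -y)` gives
`‖u + v‖ ≤ ‖w‖`. In an inner product space the first two give `‖w‖² ≤ ⟪w, u + v⟫`, so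
`‖w - (u + v)‖² = ‖w‖² - 2⟪w, u + v⟫ + ‖u + v‖² ≤ 0`.
-/

open RealInnerProductSpace

theorem eq_add_of_norm_sub_le_of_norm_add_le_s18 {E : Type*} [NormedAddCommGroup E]
    [InnerProductSpace ℝ E] {u v w : E} (hwv : ‖w - v‖ ≤ ‖u‖) (hwu : ‖w - u‖ ≤ ‖v‖)
    (huv : ‖u + v‖ ≤ ‖w‖) : w = u + v := by
  have hinner : ‖w‖ ^ 2 ≤ ⟪w, u + v⟫ := by
    have h₁ := pow_le_pow_left₀ (norm_nonneg _) hwv 2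
    have h₂ := pow_le_pow_left₀ (norm_nonneg _) hwu 2
    rw [norm_sub_sq_real] at h₁ h₂
    rw [inner_add_right]
    linarith
  have hsq : ‖u + v‖ ^ 2 ≤ ‖w‖ ^ 2 := pow_le_pow_left₀ (norm_nonneg _) huv 2
  have hzero : ‖w - (u + v)‖ ^ 2 ≤ 0 := by
    rw [norm_sub_sq_real]
    linarith
  rw [← sub_eq_zero, ← norm_eq_zero]
  exact pow_eq_zero_iff two_ne_zero |>.mp (le_antisymm hzero (sq_nonneg _))

section OddDrygas

variable {G E : Type*} [AddCommGroup G] [NormedAddCommGroup E] {f : G → E}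

theorem map_add_self_of_norm_two_nsmul_sub_le (h0 : f 0 = 0)
    (hs : ∀ x y, ‖2 • f x - f (x - y)‖ ≤ ‖f (x + y)‖) (x : G) : f (x + x) = 2 • f x := by
  have := hs x (-x)
  rw [sub_neg_eq_add, add_neg_cancel, h0, norm_zero, norm_le_zero_iff, sub_eq_zero] at this
  exact this.symm

theorem norm_map_add_sub_le [NormedSpace ℝ E] (h0 : f 0 = 0)
    (hs : ∀ x y, ‖2 • f x - f (x - y)‖ ≤ ‖f (x + y)‖) (x y : G) :
    ‖f (x + y) - f y‖ ≤ ‖f x‖ := by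
  have := hs (x + y) (x - y)
  rw [show x + y - (x - y) = y + y by abel, show x + y + (x - y) = x + x by abel,
    map_add_self_of_norm_two_nsmul_sub_le h0 hs, map_add_self_of_norm_two_nsmul_sub_le h0 hs,
    ← smul_sub, RCLike.norm_nsmul ℝ, RCLike.norm_nsmul ℝ] at this
  exact le_of_nsmul_le_nsmul_right two_ne_zero this

end OddDrygas

theorem stmt18 {G E : Type*} [AddCommGroup G] [NormedAddCommGroup E]
    [InnerProductSpace ℝ E] (f : G → E) (hodd : ∀ x : G, f (-x) = -f x)
    (h : ∀ x y : G, ‖2 • f x + f y + f (-y) - f (x - y)‖ ≤ ‖f (x + y)‖) :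
    ∀ x y : G, f (x + y) = f x + f y := by
  have : IsAddTorsionFree E := .of_isTorsionFree ℝ E
  have h0 : f 0 = 0 := self_eq_neg.mp (by simpa using hodd 0)
  have hs : ∀ x y, ‖2 • f x - f (x - y)‖ ≤ ‖f (x + y)‖ := fun x y => by
    simpa [hodd y] using h x y
  intro x y
  refine eq_add_of_norm_sub_le_of_norm_add_le_s18 (norm_map_add_sub_le h0 hs x y) ?_ ?_
  · simpa [add_comm] using norm_map_add_sub_le h0 hs y x
  · simpa [hodd, sub_eq_add_neg] using norm_map_add_sub_le h0 hs (x + y) (-y)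
end

section
/- If f : G → E satisfies the Drygas inequality and additionally f is even (f(-x) = f(x)), then f satisfies the quadratic functional equation f(x+y)+f(x-y) = 2f(x)+2f(y) for all x, y ∈ G. -/
/-!
For even `f` the Drygas inequality reads `‖2 f(x) + 2 f(y) - f(x - y)‖ ≤ ‖f(x + y)‖`, which forces
`f(0) = 0` and `f(2x) = 4 f(x)`. With `a = f(x + y)`, `b = f(x - y)`, `u = 2 f(x)`, `v = 2 f(y)`, the
substitutions `(x, ±y)` and `(x + y, ±(x - y))` give `‖u + v - b‖ ≤ ‖a‖`, `‖u + v - a‖ ≤ ‖b‖`,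
`‖a + b - v‖ ≤ ‖u‖` and `‖a + b - u‖ ≤ ‖v‖`. Squared and summed, these collapse in an inner
product space to `‖(a + b) - (u + v)‖² ≤ 0`.
-/

open RealInnerProductSpace

section InnerProduct

variable {E : Type*} [NormedAddCommGroup E] [InnerProductSpace ℝ E]

lemma norm_sub_sq_add_norm_sub_sq_real (s a b : E) :
    ‖s - a‖ ^ 2 + ‖s - b‖ ^ 2 = ‖a‖ ^ 2 + ‖b‖ ^ 2 + 2 * ⟪s, s - (a + b)⟫ := by
  rw [norm_sub_sq_real, norm_sub_sq_real, inner_sub_right, inner_add_right,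
    real_inner_self_eq_norm_sq]
  ring

lemma add_eq_add_of_norm_sub_le {a b u v : E} (h₁ : ‖u + v - b‖ ≤ ‖a‖) (h₂ : ‖u + v - a‖ ≤ ‖b‖)
    (h₃ : ‖a + b - v‖ ≤ ‖u‖) (h₄ : ‖a + b - u‖ ≤ ‖v‖) : a + b = u + v := by
  have hs := norm_sub_sq_add_norm_sub_sq_real (u + v) a b
  have ht := norm_sub_sq_add_norm_sub_sq_real (a + b) u v
  have hst : ‖a + b - (u + v)‖ ^ 2 = ⟪a + b, a + b - (u + v)⟫ + ⟪u + v, u + v - (a + b)⟫ := by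
    rw [← real_inner_self_eq_norm_sq, inner_sub_left, ← neg_sub (a + b), inner_neg_right]
    ring
  have hle : ‖a + b - (u + v)‖ ^ 2 ≤ 0 := by
    linarith [pow_le_pow_left₀ (norm_nonneg _) h₁ 2, pow_le_pow_left₀ (norm_nonneg _) h₂ 2,
      pow_le_pow_left₀ (norm_nonneg _) h₃ 2, pow_le_pow_left₀ (norm_nonneg _) h₄ 2]
  rw [← sub_eq_zero, ← norm_eq_zero, ← sq_eq_zero_iff]
  exact le_antisymm hle (sq_nonneg _)

end InnerProduct

namespace DrygasInequality

variable {G E : Type*} [AddCommGroup G] [NormedAddCommGroup E] {f : G → E}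

lemma norm_two_nsmul_add_two_nsmul_sub_le (heven : ∀ x : G, f (-x) = f x)
    (h : ∀ x y : G, ‖2 • f x + f y + f (-y) - f (x - y)‖ ≤ ‖f (x + y)‖) (x y : G) :
    ‖2 • f x + 2 • f y - f (x - y)‖ ≤ ‖f (x + y)‖ := by
  simpa only [heven, two_nsmul, add_assoc] using h x y

variable [NormedSpace ℝ E]

lemma map_zero (h : ∀ x y : G, ‖2 • f x + f y + f (-y) - f (x - y)‖ ≤ ‖f (x + y)‖) :
    f 0 = 0 := by
  have h₀ := h 0 0
  rw [neg_zero, sub_zero, add_zero,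
    show 2 • f 0 + f 0 + f 0 - f 0 = (3 : ℝ) • f 0 by module, norm_smul] at h₀
  norm_num at h₀
  exact norm_le_zero_iff.mp (by linarith [norm_nonneg (f 0)])

lemma map_add_self (heven : ∀ x : G, f (-x) = f x)
    (h : ∀ x y : G, ‖2 • f x + f y + f (-y) - f (x - y)‖ ≤ ‖f (x + y)‖) (x : G) :
    f (x + x) = 2 • 2 • f x := by
  have hx := norm_two_nsmul_add_two_nsmul_sub_le heven h x (-x)
  rw [heven, sub_neg_eq_add, add_neg_cancel, map_zero h, norm_zero, norm_le_zero_iff,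
    sub_eq_zero] at hx
  rw [← hx, two_nsmul (2 • f x)]

lemma norm_map_add_add_map_sub_sub_le (heven : ∀ x : G, f (-x) = f x)
    (h : ∀ x y : G, ‖2 • f x + f y + f (-y) - f (x - y)‖ ≤ ‖f (x + y)‖) (x y : G) :
    ‖f (x + y) + f (x - y) - 2 • f y‖ ≤ ‖2 • f x‖ := by
  have hxy := norm_two_nsmul_add_two_nsmul_sub_le heven h (x + y) (x - y)
  rw [show x + y - (x - y) = y + y by abel, show x + y + (x - y) = x + x by abel,
    map_add_self heven h, map_add_self heven h, ← smul_add, ← smul_sub, RCLike.norm_nsmul ℝ,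
    RCLike.norm_nsmul ℝ, nsmul_eq_mul, nsmul_eq_mul] at hxy
  exact le_of_mul_le_mul_left hxy two_pos

end DrygasInequality

open DrygasInequality

theorem stmt19 {G E : Type*} [AddCommGroup G] [NormedAddCommGroup E]
    [InnerProductSpace ℝ E] (f : G → E) (heven : ∀ x : G, f (-x) = f x)
    (h : ∀ x y : G, ‖2 • f x + f y + f (-y) - f (x - y)‖ ≤ ‖f (x + y)‖) :
    ∀ x y : G, f (x + y) + f (x - y) = 2 • f x + 2 • f y := by
  intro x y
  refine add_eq_add_of_norm_sub_le (norm_two_nsmul_add_two_nsmul_sub_le heven h x y) ?_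
    (norm_map_add_add_map_sub_sub_le heven h x y) ?_
  · simpa only [heven, sub_neg_eq_add, ← sub_eq_add_neg] using
      norm_two_nsmul_add_two_nsmul_sub_le heven h x (-y)
  · simpa only [add_comm y x, ← neg_sub x y, heven] using
      norm_map_add_add_map_sub_sub_le heven h y x
end
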